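/- arXiv:1411.5505 — 7 statements merged into one kernel-verified Lean document; each statement's English description precedes it below -/
import Mathlib

section
/- Let q > 2, λ > 0, and let f : [0,∞) → ℝ be a twice continuously differentiable solution of the ODE f''(ξ) + λ|f'(ξ)|^q − (1/2)ξ f'(ξ) + ((q−2)/(2(q−1))) f(ξ) = 0 on [0,∞) with initial data f(0) = −1 and f'(0) = 0. Then lim_{ξ→∞} f(ξ)/ξ^{q/(q−1)} = C, where C = [ (1/(λ(q−1))) · ((q−1)/q)^q ]^{1/(q−1)}. -/
open Set Filter Topology Real

/-- `f` is a twice continuously differentiable solution, on the set `s`, of the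
self-similar profile ODE `f'' + λ|f'|^q - (1/2)ξ f' + ((q-2)/(2(q-1))) f = 0`
associated with the generalized deterministic KPZ equation. -/
def SolvesKPZProfile (q lam : ℝ) (s : Set ℝ) (f : ℝ → ℝ) : Prop :=
  ContDiffOn ℝ 2 f s ∧
  ∀ ξ ∈ s,
    derivWithin (derivWithin f s) s ξ + lam * |derivWithin f s ξ| ^ q
      - (1 / 2) * ξ * derivWithin f s ξ + ((q - 2) / (2 * (q - 1))) * f ξ = 0

/-!
Write `g = f'` and `w = f''`. Differentiating the equation gives
`w' = (ξ/2 - λ q g^(q-1)) w + g / (2(q-1))` where `g > 0`; at a first zero of `w` this is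
positive, so `w > 0` throughout and `g` increases from `0`. Comparing with the equation then traps
`λ g^(q-1)` between `ξ/(2q-1)` and `ξ` for large `ξ`, which makes the damping coefficient in the
equation for `w'` of order `-ξ` and keeps `w` bounded.

In the rescaled variables `Y = f/ξ^γ`, `Z = g/ξ^(γ-1)`, `γ = q/(q-1)`, the equation reads
`λ Z^q = Z/2 - β Y - w/ξ^γ` with `β = (q-2)/(2(q-1))`, and `ξ Y' = Z - γ Y`. Convexity of
`Z ↦ λ Z^q`, whose tangent at `c = (λ q)^(-1/(q-1))` has slope `1`, gives `ξ Y' ≤ -γ η` when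
`Y ≥ C + η` and `ξ Y' ≥ γ η` when `Y ≤ C - η`, where `C = c/γ`. A drift of size `1/ξ` cannot be
resisted forever, since `log ξ → ∞`, so `Y` enters every band around `C` and stays there.
-/

theorem rpow_tangent_le {s t r : ℝ} (hs : 0 < s) (ht : 0 ≤ t) (hr : 1 ≤ r) :
    s ^ r + r * s ^ (r - 1) * (t - s) ≤ t ^ r := by
  have hbern := one_add_mul_self_le_rpow_one_add (s := t / s - 1)
    (by linarith [div_nonneg ht hs.le]) hr
  rw [add_sub_cancel, div_rpow ht hs.le, le_div_iff₀ (rpow_pos_of_pos hs r)] at hbern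
  calc s ^ r + r * s ^ (r - 1) * (t - s) = (1 + r * (t / s - 1)) * s ^ r := by
        rw [rpow_sub_one hs.ne']; field_simp
    _ ≤ t ^ r := hbern

theorem rpow_eq_rpow_sub_one_mul {x : ℝ} (hx : x ≠ 0) (y : ℝ) : x ^ y = x ^ (y - 1) * x := by
  rw [← rpow_add_one hx, sub_add_cancel]

theorem le_one_add_rpow {x r : ℝ} (hx : 0 ≤ x) (hr : 1 ≤ r) : x ≤ 1 + x ^ r := by
  rcases le_total x 1 with hx1 | hx1
  · linarith [rpow_nonneg hx r]
  · linarith [self_le_rpow_of_one_le hx1 hr]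

theorem HasDerivAt.eventually_lt_left {u : ℝ → ℝ} {d x : ℝ} (hu : HasDerivAt u d x)
    (hd : 0 < d) : ∀ᶠ y in 𝓝[<] x, u y < u x := by
  have hslope : Tendsto (slope u x) (𝓝[<] x) (𝓝 d) :=
    (hasDerivAt_iff_tendsto_slope.mp hu).mono_left (nhdsWithin_mono x fun y hy => ne_of_lt hy)
  filter_upwards [hslope.eventually (lt_mem_nhds hd), self_mem_nhdsWithin] with y hpos hy
  rw [slope_def_field] at hpos
  have := (div_pos_iff.mp hpos).resolve_left fun h => lt_asymm (sub_pos.mp h.2) hy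
  linarith [this.1]

theorem forall_pos_of_ne_zero_at_first_zero {u : ℝ → ℝ} {a : ℝ} (hu : ContinuousOn u (Ici a))
    (ha : 0 < u a) (hzero : ∀ x > a, (∀ y ∈ Ico a x, 0 < u y) → u x ≠ 0) :
    ∀ x ≥ a, 0 < u x := by
  by_contra! ⟨b, hab, hub⟩
  set S := Icc a b ∩ u ⁻¹' Iic 0
  have hbdd : BddBelow S := ⟨a, fun x hx => hx.1.1⟩
  have hS : IsClosed S :=
    (hu.mono Icc_subset_Ici_self).preimage_isClosed_of_isClosed isClosed_Icc isClosed_Iic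
  have hT : sInf S ∈ S := hS.csInf_mem ⟨b, ⟨hab, le_rfl⟩, hub⟩ hbdd
  set T := sInf S
  have hpos : ∀ y ∈ Ico a T, 0 < u y := fun y hy => by
    by_contra! h
    exact hy.2.not_ge (csInf_le hbdd ⟨⟨hy.1, hy.2.le.trans hT.1.2⟩, h⟩)
  have haT : a < T := hT.1.1.lt_of_ne fun h => (h ▸ hT.2 : u a ≤ 0).not_gt ha
  have : (𝓝[Ico a T] T).NeBot := right_nhdsWithin_Ico_neBot haT
  have hlim : Tendsto u (𝓝[Ico a T] T) (𝓝 (u T)) :=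
    (hu T hT.1.1).mono_left (nhdsWithin_mono _ Ico_subset_Ici_self)
  exact hzero T haT hpos (le_antisymm hT.2
    (ge_of_tendsto hlim (eventually_nhdsWithin_of_forall fun y hy => (hpos y hy).le)))

theorem exists_lt_of_hasDerivAt_le_neg_div {u u' : ℝ → ℝ} {a K ρ : ℝ} (ha : 0 < a) (hρ : 0 < ρ)
    (hu : ∀ x ≥ a, HasDerivAt u (u' x) x) (hK : ∀ x ≥ a, K ≤ u x → u' x ≤ -(ρ / x)) :
    ∃ x ≥ a, u x < K := by
  by_contra! hge
  have hd : ∀ x ≥ a, HasDerivAt (fun y => u y + ρ * log y) (u' x + ρ * x⁻¹) x := fun x hx =>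
    (hu x hx).add ((hasDerivAt_log (ha.trans_le hx).ne').const_mul ρ)
  have hanti : AntitoneOn (fun y => u y + ρ * log y) (Ici a) := by
    refine antitoneOn_of_hasDerivWithinAt_nonpos (convex_Ici a)
      (fun x hx => (hd x hx).continuousAt.continuousWithinAt)
      (fun x hx => (hd x (interior_subset hx)).hasDerivWithinAt) fun x hx => ?_
    have hx : a ≤ x := interior_subset hx
    have := hK x hx (hge x hx)
    rw [← div_eq_mul_inv]
    linarith
  obtain ⟨x, hxa, hx⟩ := ((eventually_ge_atTop a).and
    (tendsto_log_atTop.eventually_gt_atTop ((u a + ρ * log a - K) / ρ))).exists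
  have := hanti self_mem_Ici hxa hxa
  rw [div_lt_iff₀ hρ] at hx
  linarith [hge x hxa]

theorem eventually_le_of_hasDerivAt_le_neg_div {u u' : ℝ → ℝ} {K ρ : ℝ} (hρ : 0 < ρ)
    (hu : ∀ᶠ x in atTop, HasDerivAt u (u' x) x)
    (hK : ∀ᶠ x in atTop, K ≤ u x → u' x ≤ -(ρ / x)) :
    ∀ᶠ x in atTop, u x ≤ K := by
  obtain ⟨a, ha⟩ := eventually_atTop.mp ((eventually_gt_atTop 0).and (hu.and hK))
  obtain ⟨b, hab, hb⟩ := exists_lt_of_hasDerivAt_le_neg_div (ha a le_rfl).1 hρ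
    (fun x hx => (ha x hx).2.1) fun x hx => (ha x hx).2.2
  refine eventually_atTop.mpr ⟨b, fun x hx => ?_⟩
  refine image_le_of_deriv_right_lt_deriv_boundary (B := fun _ => K) (B' := 0)
    (fun y hy => (ha y (hab.trans hy.1)).2.1.continuousAt.continuousWithinAt)
    (fun y hy => (ha y (hab.trans hy.1)).2.1.hasDerivWithinAt) hb.le
    (fun _ => hasDerivAt_const _ _) (fun y hy hyK => ?_) ⟨hx, le_rfl⟩
  obtain ⟨hy0, -, hder⟩ := ha y (hab.trans hy.1)
  show u' y < 0
  linarith [hder hyK.ge, div_pos hρ hy0]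

theorem eventually_ge_of_hasDerivAt_ge_div {u u' : ℝ → ℝ} {K ρ : ℝ} (hρ : 0 < ρ)
    (hu : ∀ᶠ x in atTop, HasDerivAt u (u' x) x)
    (hK : ∀ᶠ x in atTop, u x ≤ K → ρ / x ≤ u' x) :
    ∀ᶠ x in atTop, K ≤ u x := by
  have := eventually_le_of_hasDerivAt_le_neg_div (u := -u) (u' := -u') (K := -K) hρ
    (hu.mono fun x hx => hx.neg) (hK.mono fun x hx hxK => by
      simp only [Pi.neg_apply, neg_le_neg_iff] at hxK ⊢; exact hx hxK)
  exact this.mono fun x hx => by simpa using hx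

theorem HasDerivAt.div_rpow_add_one {f : ℝ → ℝ} {f' x p : ℝ} (hf : HasDerivAt f f' x)
    (hx : 0 < x) :
    HasDerivAt (fun y => f y / y ^ (p + 1))
      ((f' / x ^ p - (p + 1) * (f x / x ^ (p + 1))) / x) x := by
  refine (hf.div (hasDerivAt_rpow_const (Or.inl hx.ne')) (rpow_pos_of_pos hx _).ne').congr_deriv ?_
  rw [add_sub_cancel_right, rpow_add_one hx.ne']
  have := rpow_pos_of_pos hx p
  field_simp

theorem kpz_constant_eq {q lam : ℝ} (hq : 1 < q) (hlam : 0 < lam) :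
    (1 / (lam * (q - 1)) * ((q - 1) / q) ^ q) ^ (1 / (q - 1))
      = (q - 1) / q * (1 / (lam * q)) ^ (1 / (q - 1)) := by
  have hr : 0 < (q - 1) / q := div_pos (by linarith) (by linarith)
  rw [rpow_eq_rpow_sub_one_mul hr.ne' q,
    show 1 / (lam * (q - 1)) * (((q - 1) / q) ^ (q - 1) * ((q - 1) / q))
      = ((q - 1) / q) ^ (q - 1) * (1 / (lam * q)) by field_simp [show q - 1 ≠ 0 by linarith],
    mul_rpow (rpow_nonneg hr.le _) (one_div_pos.2 (mul_pos hlam (by linarith))).le, one_div (q - 1),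
    rpow_rpow_inv hr.le (by linarith)]

theorem kpz_fixed_point {q lam c : ℝ} (hq : 1 < q) (hc : 0 < c)
    (hcq : lam * q * c ^ (q - 1) = 1) :
    lam * c ^ q = c / 2 - (q - 2) / (2 * (q - 1)) * ((q - 1) / q * c) := by
  have hcq' : lam * c ^ q = c / q := by
    rw [eq_div_iff (by linarith), rpow_eq_rpow_sub_one_mul hc.ne' q]
    linear_combination c * hcq
  rw [hcq']
  field_simp [show q - 1 ≠ 0 by linarith]
  ring

theorem kpz_drift_le_of_limit_add_le {q lam c Z Y R η : ℝ} (hq : 2 < q) (hlam : 0 < lam)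
    (hc : 0 < c) (hcq : lam * q * c ^ (q - 1) = 1) (hZ : 0 ≤ Z) (hR : 0 ≤ R) (hη : 0 ≤ η)
    (hE : lam * Z ^ q = Z / 2 - (q - 2) / (2 * (q - 1)) * Y - R)
    (hY : (q - 1) / q * c + η ≤ Y) :
    Z - q / (q - 1) * Y ≤ -(q / (q - 1) * η) := by
  have hβ : 0 ≤ (q - 2) / (2 * (q - 1)) := div_nonneg (by linarith) (by linarith)
  have hγ : 0 ≤ q / (q - 1) := div_nonneg (by linarith) (by linarith)
  have hγC : q / (q - 1) * ((q - 1) / q * c) = c := by field_simp [show q - 1 ≠ 0 by linarith]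
  -- the tangent to `λ Z^q` at `c` has slope `1`
  have htan := mul_le_mul_of_nonneg_left (rpow_tangent_le hc hZ (by linarith : 1 ≤ q)) hlam.le
  rw [mul_add, ← mul_assoc, ← mul_assoc, hcq, one_mul] at htan
  have := mul_le_mul_of_nonneg_left hY hβ
  have := mul_le_mul_of_nonneg_left hY hγ
  linarith [mul_nonneg hβ hη, kpz_fixed_point (by linarith) hc hcq]

theorem kpz_drift_ge_of_le_limit_sub {q lam c Z Y R η : ℝ} (hq : 2 < q) (hlam : 0 < lam)
    (hc : 0 < c) (hcq : lam * q * c ^ (q - 1) = 1) (hZ : 0 < Z)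
    (hS : 1 / 2 ≤ lam * q * Z ^ (q - 1)) (hR : R < (q - 2) / (2 * (q - 1)) * η)
    (hE : lam * Z ^ q = Z / 2 - (q - 2) / (2 * (q - 1)) * Y - R)
    (hY : Y ≤ (q - 1) / q * c - η) :
    q / (q - 1) * η ≤ Z - q / (q - 1) * Y := by
  have hβ : 0 ≤ (q - 2) / (2 * (q - 1)) := div_nonneg (by linarith) (by linarith)
  have hγ : 0 ≤ q / (q - 1) := div_nonneg (by linarith) (by linarith)
  have hγC : q / (q - 1) * ((q - 1) / q * c) = c := by field_simp [show q - 1 ≠ 0 by linarith]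
  have hcZ : c ≤ Z := by
    by_contra! hZc
    -- on `[Z, c]` the slope of `λ Z^q` exceeds `1/2`, so `λ Z^q - Z/2` would rise from `Z` to `c`
    have htan := mul_le_mul_of_nonneg_left (rpow_tangent_le hZ hc.le (by linarith : 1 ≤ q))
      hlam.le
    have hslope := mul_le_mul_of_nonneg_right hS (sub_pos.2 hZc).le
    rw [mul_add, ← mul_assoc, ← mul_assoc] at htan
    linarith [mul_le_mul_of_nonneg_left hY hβ, kpz_fixed_point (by linarith) hc hcq]
  linarith [mul_le_mul_of_nonneg_left hY hγ]

structure KPZProfileSystem (q lam : ℝ) (f g w : ℝ → ℝ) : Prop where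
  two_lt : 2 < q
  lam_pos : 0 < lam
  continuousOn_f : ContinuousOn f (Ici 0)
  continuousOn_g : ContinuousOn g (Ici 0)
  continuousOn_w : ContinuousOn w (Ici 0)
  hasDerivAt_f : ∀ ξ > 0, HasDerivAt f (g ξ) ξ
  hasDerivAt_g : ∀ ξ > 0, HasDerivAt g (w ξ) ξ
  ode : ∀ ξ ≥ 0, w ξ = ξ / 2 * g ξ - lam * |g ξ| ^ q - (q - 2) / (2 * (q - 1)) * f ξ
  f_zero : f 0 = -1
  g_zero : g 0 = 0

namespace KPZProfileSystem

variable {q lam : ℝ} {f g w : ℝ → ℝ}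

theorem hasDerivAt_w (h : KPZProfileSystem q lam f g w) {ξ : ℝ} (hξ : 0 < ξ) (hg : 0 < g ξ) :
    HasDerivAt w ((ξ / 2 - lam * q * g ξ ^ (q - 1)) * w ξ + g ξ / (2 * (q - 1))) ξ := by
  have hq := h.two_lt
  have hw : w =ᶠ[𝓝 ξ] fun x => x / 2 * g x - lam * g x ^ q - (q - 2) / (2 * (q - 1)) * f x := by
    filter_upwards [(h.hasDerivAt_g ξ hξ).continuousAt.eventually (lt_mem_nhds hg),
      lt_mem_nhds hξ] with x hgx hx
    rw [h.ode x hx.le, abs_of_pos hgx]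
  refine (((((hasDerivAt_id ξ).div_const 2).mul (h.hasDerivAt_g ξ hξ)).sub
    (((h.hasDerivAt_g ξ hξ).rpow_const (Or.inl hg.ne')).const_mul lam)).sub
    ((h.hasDerivAt_f ξ hξ).const_mul _)).congr_of_eventuallyEq hw |>.congr_deriv ?_
  have : q - 1 ≠ 0 := by linarith
  simp only [id]
  field_simp
  ring

theorem w_pos (h : KPZProfileSystem q lam f g w) : ∀ ξ ≥ 0, 0 < w ξ := by
  have hq := h.two_lt
  have hw0 : 0 < w 0 := by
    rw [h.ode 0 le_rfl, h.g_zero, h.f_zero, abs_zero, zero_rpow (by linarith)]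
    have : 0 < (q - 2) / (2 * (q - 1)) := div_pos (by linarith) (by linarith)
    linarith
  refine forall_pos_of_ne_zero_at_first_zero h.continuousOn_w hw0 fun T hT hpos hwT => ?_
  -- `g` increases on `[0, T]`, so `w' T = g T / (2(q-1)) > 0`, while `w` drops to `0` at `T`.
  have hmono : StrictMonoOn g (Icc 0 T) :=
    strictMonoOn_of_hasDerivWithinAt_pos (convex_Icc 0 T)
      (h.continuousOn_g.mono Icc_subset_Ici_self)
      (fun x hx => by
        rw [interior_Icc] at hx; exact (h.hasDerivAt_g x hx.1).hasDerivWithinAt)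
      fun x hx => by rw [interior_Icc] at hx; exact hpos x ⟨hx.1.le, hx.2⟩
  have hgT : 0 < g T := h.g_zero ▸ hmono (left_mem_Icc.2 hT.le) (right_mem_Icc.2 hT.le) hT
  have hder := h.hasDerivAt_w hT hgT
  rw [hwT, mul_zero, zero_add] at hder
  obtain ⟨y, hy, hyT⟩ := ((hder.eventually_lt_left (div_pos hgT (by linarith))).and
    (Ioo_mem_nhdsLT hT)).exists
  exact (hpos y ⟨hyT.1.le, hyT.2⟩).not_gt (hwT ▸ hy)

theorem strictMonoOn_g (h : KPZProfileSystem q lam f g w) : StrictMonoOn g (Ici 0) :=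
  strictMonoOn_of_hasDerivWithinAt_pos (convex_Ici 0) h.continuousOn_g
    (fun x hx => (h.hasDerivAt_g x (by simpa using hx)).hasDerivWithinAt)
    fun x hx => h.w_pos x (interior_subset hx)

theorem g_pos (h : KPZProfileSystem q lam f g w) {ξ : ℝ} (hξ : 0 < ξ) : 0 < g ξ :=
  h.g_zero ▸ h.strictMonoOn_g self_mem_Ici hξ.le hξ

theorem neg_one_le_f (h : KPZProfileSystem q lam f g w) {ξ : ℝ} (hξ : 0 ≤ ξ) : -1 ≤ f ξ :=
  h.f_zero ▸ monotoneOn_of_hasDerivWithinAt_nonneg (convex_Ici 0) h.continuousOn_f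
    (fun x hx => (h.hasDerivAt_f x (by simpa using hx)).hasDerivWithinAt)
    (fun x hx => (h.g_pos (by simpa using hx)).le) self_mem_Ici hξ hξ

theorem f_le_mul_g (h : KPZProfileSystem q lam f g w) {ξ : ℝ} (hξ : 0 ≤ ξ) : f ξ ≤ ξ * g ξ := by
  have hmono : MonotoneOn (fun x => x * g x - f x) (Ici 0) :=
    monotoneOn_of_hasDerivWithinAt_nonneg (convex_Ici 0)
      ((continuousOn_id.mul h.continuousOn_g).sub h.continuousOn_f)
      (fun x hx => (((hasDerivAt_id x).mul (h.hasDerivAt_g x (by simpa using hx))).sub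
        (h.hasDerivAt_f x (by simpa using hx))).hasDerivWithinAt)
      fun x hx => by
        have hx : 0 < x := by simpa using hx
        simp only [id, one_mul, add_sub_cancel_left]
        exact (mul_pos hx (h.w_pos x hx.le)).le
  have := hmono self_mem_Ici hξ hξ
  simp only [zero_mul, h.f_zero] at this
  linarith

theorem mul_g_div_le_w (h : KPZProfileSystem q lam f g w) {ξ : ℝ} (hξ : 0 < ξ)
    (hg : lam * g ξ ^ (q - 1) ≤ ξ / (2 * q - 1)) :
    ξ * g ξ / (2 * (q - 1) * (2 * q - 1)) ≤ w ξ := by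
  have hq := h.two_lt
  have hgξ := h.g_pos hξ
  have hf : (q - 2) / (2 * (q - 1)) * f ξ ≤ (q - 2) / (2 * (q - 1)) * (ξ * g ξ) :=
    mul_le_mul_of_nonneg_left (h.f_le_mul_g hξ.le) (div_pos (by linarith) (by linarith)).le
  have hpow : lam * g ξ ^ q ≤ ξ / (2 * q - 1) * g ξ := by
    rw [rpow_eq_rpow_sub_one_mul hgξ.ne' q, ← mul_assoc]
    exact mul_le_mul_of_nonneg_right hg hgξ.le
  have hcoef : ξ * g ξ / (2 * (q - 1) * (2 * q - 1))
      = ξ / 2 * g ξ - ξ / (2 * q - 1) * g ξ - (q - 2) / (2 * (q - 1)) * (ξ * g ξ) := by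
    field_simp [show 2 * q - 1 ≠ 0 by linarith, show q - 1 ≠ 0 by linarith]
    ring
  rw [h.ode ξ hξ.le, abs_of_pos hgξ, hcoef]
  linarith

theorem mul_le_lam_mul_deriv_rpow (h : KPZProfileSystem q lam f g w) {ξ : ℝ} (hξ1 : 1 ≤ ξ)
    (hg : lam * g ξ ^ (q - 1) ≤ ξ / (2 * q - 1)) :
    lam * g 1 ^ (q - 1) / (2 * (2 * q - 1)) * ξ ≤ lam * (w ξ * (q - 1) * g ξ ^ (q - 1 - 1)) := by
  have hq := h.two_lt
  have hlam := h.lam_pos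
  have hξ : 0 < ξ := by linarith
  have hgξ := h.g_pos hξ
  have hg1 : g 1 ^ (q - 1) ≤ g ξ ^ (q - 1) := rpow_le_rpow (h.g_pos one_pos).le
    (h.strictMonoOn_g.monotoneOn (mem_Ici.2 zero_le_one) hξ.le hξ1) (by linarith)
  have e : ξ * g ξ / (2 * (q - 1) * (2 * q - 1)) * (q - 1) * g ξ ^ (q - 1 - 1)
      = ξ * g ξ ^ (q - 1) / (2 * (2 * q - 1)) := by
    rw [rpow_sub_one hgξ.ne']
    field_simp [show q - 1 ≠ 0 by linarith]
  calc lam * g 1 ^ (q - 1) / (2 * (2 * q - 1)) * ξ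
      = lam * (ξ * g 1 ^ (q - 1)) / (2 * (2 * q - 1)) := by ring
    _ ≤ lam * (ξ * g ξ ^ (q - 1)) / (2 * (2 * q - 1)) :=
        div_le_div_of_nonneg_right (mul_le_mul_of_nonneg_left
          (mul_le_mul_of_nonneg_left hg1 hξ.le) hlam.le) (by linarith)
    _ = lam * (ξ * g ξ / (2 * (q - 1) * (2 * q - 1)) * (q - 1) * g ξ ^ (q - 1 - 1)) := by
        rw [e]; ring
    _ ≤ lam * (w ξ * (q - 1) * g ξ ^ (q - 1 - 1)) :=
        mul_le_mul_of_nonneg_left (mul_le_mul_of_nonneg_right (mul_le_mul_of_nonneg_right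
          (h.mul_g_div_le_w hξ hg) (by linarith)) (rpow_nonneg hgξ.le _)) hlam.le

theorem eventually_div_le_lam_mul_rpow (h : KPZProfileSystem q lam f g w) :
    ∀ᶠ ξ in atTop, ξ / (2 * q - 1) ≤ lam * g ξ ^ (q - 1) := by
  have hq := h.two_lt
  have hc₀ : 0 < lam * g 1 ^ (q - 1) / (2 * (2 * q - 1)) :=
    div_pos (mul_pos h.lam_pos (rpow_pos_of_pos (h.g_pos one_pos) _)) (by linarith)
  have hsub := eventually_ge_of_hasDerivAt_ge_div (K := 0) (ρ := 1) one_pos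
    (u := fun ξ => lam * g ξ ^ (q - 1) - ξ / (2 * q - 1))
    (u' := fun ξ => lam * (w ξ * (q - 1) * g ξ ^ (q - 1 - 1)) - 1 / (2 * q - 1))
    (by
      filter_upwards [eventually_gt_atTop 0] with ξ hξ
      exact (((h.hasDerivAt_g ξ hξ).rpow_const (Or.inl (h.g_pos hξ).ne')).const_mul lam).sub
        ((hasDerivAt_id ξ).div_const _))
    (by
      filter_upwards [eventually_ge_atTop 1,
        eventually_ge_atTop (2 / (lam * g 1 ^ (q - 1) / (2 * (2 * q - 1))))] with ξ hξ1 hξc hu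
      have hslope := h.mul_le_lam_mul_deriv_rpow hξ1 (by linarith)
      have h1ξ : 1 / ξ ≤ 1 := by rw [div_le_one (by linarith)]; exact hξ1
      have h2q : 1 / (2 * q - 1) ≤ 1 := by rw [div_le_one (by linarith)]; linarith
      have : 2 ≤ lam * g 1 ^ (q - 1) / (2 * (2 * q - 1)) * ξ := by
        rwa [div_le_iff₀ hc₀, mul_comm] at hξc
      linarith)
  filter_upwards [hsub] with ξ hξ
  linarith

theorem eventually_lam_mul_rpow_le (h : KPZProfileSystem q lam f g w) :
    ∀ᶠ ξ in atTop, lam * g ξ ^ (q - 1) ≤ ξ := by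
  have hq := h.two_lt
  have hβ : 0 < (q - 2) / (2 * (q - 1)) := div_pos (by linarith) (by linarith)
  have hg1 := h.g_pos one_pos
  filter_upwards [eventually_ge_atTop 1,
    eventually_ge_atTop (2 * ((q - 2) / (2 * (q - 1))) / g 1)] with ξ hξ1 hξβ
  have hξ : 0 < ξ := by linarith
  have hgξ := h.g_pos hξ
  have hw := h.w_pos ξ hξ.le
  rw [h.ode ξ hξ.le, abs_of_pos hgξ, rpow_eq_rpow_sub_one_mul hgξ.ne' q] at hw
  have hf := mul_le_mul_of_nonneg_left (h.neg_one_le_f hξ.le) hβ.le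
  have hβξ : 2 * ((q - 2) / (2 * (q - 1))) ≤ ξ * g ξ := by
    rw [div_le_iff₀ hg1] at hξβ
    nlinarith [h.strictMonoOn_g.monotoneOn (mem_Ici.2 zero_le_one) hξ.le hξ1]
  refine le_of_mul_le_mul_right ?_ hgξ
  linarith

theorem eventually_w_le (h : KPZProfileSystem q lam f g w) :
    ∀ᶠ ξ in atTop, w ξ ≤ (2 * q - 1) * (3 + 1 / lam) := by
  have hq := h.two_lt
  have hlam := h.lam_pos
  refine eventually_le_of_hasDerivAt_le_neg_div (ρ := 1) one_pos
    (u' := fun ξ => (ξ / 2 - lam * q * g ξ ^ (q - 1)) * w ξ + g ξ / (2 * (q - 1))) ?_ ?_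
  · filter_upwards [eventually_gt_atTop 0] with ξ hξ using h.hasDerivAt_w hξ (h.g_pos hξ)
  filter_upwards [eventually_ge_atTop 1, h.eventually_div_le_lam_mul_rpow,
    h.eventually_lam_mul_rpow_le] with ξ hξ1 hlow hup hW
  have hξ : 0 < ξ := by linarith
  have hgξ := h.g_pos hξ
  -- the damping `ξ/2 - λ q g^(q-1) ≤ -ξ/(2(2q-1))` beats the forcing `g/(2(q-1)) ≤ (1 + ξ/λ)/2`
  have hdamp : ξ / 2 - lam * q * g ξ ^ (q - 1) ≤ -(ξ / (2 * (2 * q - 1))) := by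
    have h2q : 2 * q - 1 ≠ 0 := by linarith
    have e : q * (ξ / (2 * q - 1)) = ξ / 2 + ξ / (2 * (2 * q - 1)) := by
      rw [div_add_div _ _ two_ne_zero (mul_ne_zero two_ne_zero h2q), mul_div_assoc',
        div_eq_div_iff h2q (by positivity)]
      ring
    linarith [mul_le_mul_of_nonneg_left hlow (by linarith : (0 : ℝ) ≤ q)]
  have hforce : g ξ / (2 * (q - 1)) ≤ (1 + ξ / lam) / 2 := by
    have hg : g ξ ≤ 1 + ξ / lam := (le_one_add_rpow (r := q - 1) hgξ.le (by linarith)).trans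
      (by gcongr; rw [le_div_iff₀ hlam, mul_comm]; exact hup)
    calc g ξ / (2 * (q - 1)) ≤ g ξ / 2 := div_le_div_of_nonneg_left hgξ.le two_pos (by linarith)
      _ ≤ (1 + ξ / lam) / 2 := by linarith
  have hWpos : 0 < (2 * q - 1) * (3 + 1 / lam) := by
    have : 0 < 2 * q - 1 := by linarith
    positivity
  have hdrift : (ξ / 2 - lam * q * g ξ ^ (q - 1)) * w ξ ≤ -(3 * ξ) / 2 - ξ / lam / 2 :=
    calc (ξ / 2 - lam * q * g ξ ^ (q - 1)) * w ξ ≤ -(ξ / (2 * (2 * q - 1))) * w ξ :=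
          mul_le_mul_of_nonneg_right hdamp (hWpos.trans_le hW).le
      _ ≤ -(ξ / (2 * (2 * q - 1))) * ((2 * q - 1) * (3 + 1 / lam)) :=
          mul_le_mul_of_nonpos_left hW (neg_nonpos.2 (div_pos hξ (by linarith)).le)
      _ = -(3 * ξ) / 2 - ξ / lam / 2 := by field_simp [show 2 * q - 1 ≠ 0 by linarith]; ring
  have : 1 / ξ ≤ 1 := by rw [div_le_one hξ]; exact hξ1
  show _ ≤ -(1 / ξ)
  linarith

theorem tendsto_w_div_rpow (h : KPZProfileSystem q lam f g w) {r : ℝ} (hr : 0 < r) :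
    Tendsto (fun ξ => w ξ / ξ ^ r) atTop (𝓝 0) :=
  tendsto_of_tendsto_of_tendsto_of_le_of_le' tendsto_const_nhds
    (tendsto_const_nhds.div_atTop (tendsto_rpow_atTop hr))
    (by filter_upwards [eventually_gt_atTop 0] with ξ hξ using
      div_nonneg (h.w_pos ξ hξ.le).le (rpow_nonneg hξ.le r))
    (by filter_upwards [eventually_gt_atTop 0, h.eventually_w_le] with ξ hξ hw using
      div_le_div_of_nonneg_right hw (rpow_nonneg hξ.le r))

theorem rescaled_ode (h : KPZProfileSystem q lam f g w) {ξ : ℝ} (hξ : 0 < ξ) :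
    lam * (g ξ / ξ ^ (1 / (q - 1))) ^ q = g ξ / ξ ^ (1 / (q - 1)) / 2
      - (q - 2) / (2 * (q - 1)) * (f ξ / ξ ^ (q / (q - 1))) - w ξ / ξ ^ (q / (q - 1)) := by
  have hq := h.two_lt
  have hgξ := h.g_pos hξ
  have hγ : q / (q - 1) = 1 / (q - 1) + 1 := by field_simp [show q - 1 ≠ 0 by linarith]; ring
  rw [div_rpow hgξ.le (rpow_nonneg hξ.le _), ← rpow_mul hξ.le, one_div_mul_eq_div, h.ode ξ hξ.le,
    abs_of_pos hgξ, hγ, rpow_add_one hξ.ne']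
  have := rpow_pos_of_pos hξ (1 / (q - 1))
  field_simp
  ring

theorem eventually_half_le_lam_mul_rescaled_rpow (h : KPZProfileSystem q lam f g w) :
    ∀ᶠ ξ in atTop, 1 / 2 ≤ lam * q * (g ξ / ξ ^ (1 / (q - 1))) ^ (q - 1) := by
  have hq := h.two_lt
  filter_upwards [eventually_gt_atTop 0, h.eventually_div_le_lam_mul_rpow] with ξ hξ hlow
  rw [div_rpow (h.g_pos hξ).le (rpow_nonneg hξ.le _), ← rpow_mul hξ.le,
    one_div_mul_cancel (by linarith), rpow_one, mul_div_assoc', le_div_iff₀ hξ]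
  have h2q : ξ / 2 ≤ q * (ξ / (2 * q - 1)) := by
    rw [mul_div_assoc', div_le_div_iff₀ two_pos (by linarith)]
    linarith
  linarith [mul_le_mul_of_nonneg_left hlow (by linarith : (0 : ℝ) ≤ q)]

theorem hasDerivAt_rescaled (h : KPZProfileSystem q lam f g w) {ξ : ℝ} (hξ : 0 < ξ) :
    HasDerivAt (fun x => f x / x ^ (q / (q - 1)))
      ((g ξ / ξ ^ (1 / (q - 1)) - q / (q - 1) * (f ξ / ξ ^ (q / (q - 1)))) / ξ) ξ := by
  have hq := h.two_lt
  rw [show q / (q - 1) = 1 / (q - 1) + 1 by field_simp [show q - 1 ≠ 0 by linarith]; ring]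
  exact (h.hasDerivAt_f ξ hξ).div_rpow_add_one hξ

theorem eventually_rescaled_le (h : KPZProfileSystem q lam f g w) {c η : ℝ} (hc : 0 < c)
    (hcq : lam * q * c ^ (q - 1) = 1) (hη : 0 < η) :
    ∀ᶠ ξ in atTop, f ξ / ξ ^ (q / (q - 1)) ≤ (q - 1) / q * c + η := by
  have hq := h.two_lt
  have hγ : 0 < q / (q - 1) := div_pos (by linarith) (by linarith)
  refine eventually_le_of_hasDerivAt_le_neg_div (mul_pos hγ hη)
    (eventually_gt_atTop 0 |>.mono fun ξ hξ => h.hasDerivAt_rescaled hξ) ?_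
  filter_upwards [eventually_gt_atTop 0] with ξ hξ hY
  have hZ := div_pos (h.g_pos hξ) (rpow_pos_of_pos hξ (1 / (q - 1)))
  have hR := div_nonneg (h.w_pos ξ hξ.le).le (rpow_nonneg hξ.le (q / (q - 1)))
  rw [← neg_div]
  exact div_le_div_of_nonneg_right (kpz_drift_le_of_limit_add_le hq h.lam_pos hc hcq hZ.le hR
    hη.le (h.rescaled_ode hξ) hY) hξ.le

theorem eventually_le_rescaled (h : KPZProfileSystem q lam f g w) {c η : ℝ} (hc : 0 < c)
    (hcq : lam * q * c ^ (q - 1) = 1) (hη : 0 < η) :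
    ∀ᶠ ξ in atTop, (q - 1) / q * c - η ≤ f ξ / ξ ^ (q / (q - 1)) := by
  have hq := h.two_lt
  have hγ : 0 < q / (q - 1) := div_pos (by linarith) (by linarith)
  have hβη : 0 < (q - 2) / (2 * (q - 1)) * η := mul_pos (div_pos (by linarith) (by linarith)) hη
  refine eventually_ge_of_hasDerivAt_ge_div (mul_pos hγ hη)
    (eventually_gt_atTop 0 |>.mono fun ξ hξ => h.hasDerivAt_rescaled hξ) ?_
  filter_upwards [eventually_gt_atTop 0, h.eventually_half_le_lam_mul_rescaled_rpow,
    (h.tendsto_w_div_rpow hγ).eventually (gt_mem_nhds hβη)] with ξ hξ hS hR hY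
  have hZ := div_pos (h.g_pos hξ) (rpow_pos_of_pos hξ (1 / (q - 1)))
  exact div_le_div_of_nonneg_right (kpz_drift_ge_of_le_limit_sub hq h.lam_pos hc hcq hZ hS hR
    (h.rescaled_ode hξ) hY) hξ.le

theorem tendsto_rescaled (h : KPZProfileSystem q lam f g w) :
    Tendsto (fun ξ => f ξ / ξ ^ (q / (q - 1))) atTop
      (𝓝 ((q - 1) / q * (1 / (lam * q)) ^ (1 / (q - 1)))) := by
  have hq := h.two_lt
  have hlq : 0 < lam * q := mul_pos h.lam_pos (by linarith)
  have hc := rpow_pos_of_pos (one_div_pos.2 hlq) (1 / (q - 1))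
  have hcq : lam * q * ((1 / (lam * q)) ^ (1 / (q - 1))) ^ (q - 1) = 1 := by
    rw [← rpow_mul (one_div_pos.2 hlq).le, one_div_mul_cancel (by linarith), rpow_one,
      mul_one_div_cancel hlq.ne']
  refine tendsto_order.2 ⟨fun b hb => ?_, fun b hb => ?_⟩
  · filter_upwards [h.eventually_le_rescaled hc hcq (half_pos (sub_pos.2 hb))] with ξ hξ
    linarith
  · filter_upwards [h.eventually_rescaled_le hc hcq (half_pos (sub_pos.2 hb))] with ξ hξ
    linarith

end KPZProfileSystem

theorem SolvesKPZProfile.kpzProfileSystem {q lam : ℝ} {f : ℝ → ℝ}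
    (hsol : SolvesKPZProfile q lam (Ici 0) f) (hq : 2 < q) (hlam : 0 < lam) (hf0 : f 0 = -1)
    (hf'0 : derivWithin f (Ici 0) 0 = 0) :
    KPZProfileSystem q lam f (derivWithin f (Ici 0))
      (derivWithin (derivWithin f (Ici 0)) (Ici 0)) := by
  obtain ⟨hf, hode⟩ := hsol
  have hg : ContDiffOn ℝ 1 (derivWithin f (Ici 0)) (Ici 0) :=
    hf.derivWithin (uniqueDiffOn_Ici 0) (by norm_num)
  have hasDerivAt_of {u : ℝ → ℝ} (hu : DifferentiableOn ℝ u (Ici 0)) (ξ : ℝ) (hξ : 0 < ξ) :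
      HasDerivAt u (derivWithin u (Ici 0) ξ) ξ :=
    (hu ξ hξ.le).hasDerivWithinAt.hasDerivAt (Ici_mem_nhds hξ)
  exact
    { two_lt := hq
      lam_pos := hlam
      continuousOn_f := hf.continuousOn
      continuousOn_g := hg.continuousOn
      continuousOn_w := hg.continuousOn_derivWithin (uniqueDiffOn_Ici 0) le_rfl
      hasDerivAt_f := hasDerivAt_of (hf.differentiableOn (by norm_num))
      hasDerivAt_g := hasDerivAt_of (hg.differentiableOn one_ne_zero)
      ode := fun ξ hξ => by linarith [hode ξ hξ]
      f_zero := hf0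
      g_zero := hf'0 }

theorem kpz_selfsimilar_asymptotics (q lam : ℝ) (hq : 2 < q) (hlam : 0 < lam)
    (f : ℝ → ℝ)
    (hsol : SolvesKPZProfile q lam (Set.Ici 0) f)
    (hf0 : f 0 = -1)
    (hf'0 : derivWithin f (Set.Ici 0) 0 = 0) :
    Tendsto (fun ξ : ℝ => f ξ / ξ ^ (q / (q - 1))) atTop
      (𝓝 ((1 / (lam * (q - 1)) * ((q - 1) / q) ^ q) ^ (1 / (q - 1)))) := by
  rw [kpz_constant_eq (by linarith) hlam]
  exact (hsol.kpzProfileSystem hq hlam hf0 hf'0).tendsto_rescaled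
end

section
/- Let q > 2, λ > 0, and let f be a twice continuously differentiable solution of the ODE f''(ξ) + λ|f'(ξ)|^q − (1/2)ξ f'(ξ) + ((q−2)/(2(q−1))) f(ξ) = 0 on an interval [0, ξ̄) (with 0 < ξ̄ ≤ ∞), satisfying f(0) = −1 and f'(0) = 0. Then f'(ξ) > 0 and f''(ξ) > 0 for every ξ ∈ (0, ξ̄). -/
/-!
Write `g = f'`, `w = f''` and `c = (q-2)/(2(q-1)) ∈ (0, 1/2)`. At the origin the equation gives
`w 0 = -c f 0 = c > 0`. If `w` ever vanished, take its first zero `ξ₀ > 0`; then `g` increases on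
`[0, ξ₀]`, so `g ξ₀ > 0`. Differentiating the equation, `w' = (1/2 - c) g + (ξ/2 - λ q |g|^(q-2) g) w`,
hence `w' ξ₀ = (1/2 - c) g ξ₀ > 0`; but `ξ₀` minimises `w` on `[0, ξ₀]`, which forces `w' ξ₀ ≤ 0`.
So `w > 0` throughout, and then `g > g 0 = 0` away from the origin.
-/

open Set Filter Topology Real

/-- The interval `[0, ξb)` of real numbers, where the right endpoint `ξb` is an
extended real number (so `ξb = ⊤` gives `[0, ∞)`). -/
def KPZDomain (ξb : EReal) : Set ℝ := {ξ : ℝ | 0 ≤ ξ ∧ (ξ : EReal) < ξb}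

lemma exists_first_zero_of_pos_of_nonpos {w : ℝ → ℝ} {a b : ℝ} (hab : a ≤ b)
    (hw : ContinuousOn w (Icc a b)) (ha : 0 < w a) (hb : w b ≤ 0) :
    ∃ x ∈ Ioc a b, w x = 0 ∧ ∀ t ∈ Ico a x, 0 < w t := by
  obtain ⟨x, ⟨hxab, hwx⟩, hleast⟩ :=
    (isCompact_Icc.of_isClosed_subset (hw.preimage_isClosed_of_isClosed isClosed_Icc isClosed_Iic)
      inter_subset_left).exists_isLeast ⟨b, right_mem_Icc.2 hab, hb⟩
  have hpos : ∀ t ∈ Ico a x, 0 < w t := fun t ht =>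
    not_le.1 fun hwt => (hleast ⟨⟨ht.1, ht.2.le.trans hxab.2⟩, hwt⟩).not_gt ht.2
  have hax : a < x := hxab.1.lt_of_ne fun h => (h ▸ ha).not_ge hwx
  obtain ⟨t, ht, hwt⟩ := intermediate_value_Icc' hax.le (hw.mono (Icc_subset_Icc_right hxab.2))
    ⟨hwx, ha.le⟩
  have htx : t = x := ht.2.eq_of_not_lt fun htx => (hpos t ⟨ht.1, htx⟩).ne' hwt
  exact ⟨x, ⟨hax, hxab.2⟩, htx ▸ hwt, hpos⟩

lemma IsMinOn.hasDerivWithinAt_nonpos_of_right_endpoint {w : ℝ → ℝ} {a x L : ℝ} (hax : a < x)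
    (hmin : IsMinOn w (Icc a x) x) (hw : HasDerivWithinAt w L (Icc a x) x) : L ≤ 0 := by
  have hcone : a - x ∈ posTangentConeAt (Icc a x) x :=
    sub_mem_posTangentConeAt_of_segment_subset ((segment_symm ℝ x a).trans_subset
      (segment_subset_Icc hax.le))
  have := hmin.localize.hasFDerivWithinAt_nonneg hw.hasFDerivWithinAt hcone
  rw [ContinuousLinearMap.toSpanSingleton_apply, smul_eq_mul] at this
  nlinarith

lemma lt_of_hasDerivWithinAt_pos {s : Set ℝ} (hs : s.OrdConnected) {g w : ℝ → ℝ} {a b : ℝ}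
    (ha : a ∈ s) (hb : b ∈ s) (hg : ∀ t ∈ s, HasDerivWithinAt g (w t) s t)
    (hw : ∀ t ∈ Ioo a b, 0 < w t) (hab : a < b) : g a < g b := by
  have hsub : Icc a b ⊆ s := hs.out ha hb
  refine strictMonoOn_of_hasDerivWithinAt_pos (f' := w) (convex_Icc a b)
    (fun t ht => (hg t (hsub ht)).continuousWithinAt.mono hsub) (fun t ht => ?_) (fun t ht => ?_)
    (left_mem_Icc.2 hab.le) (right_mem_Icc.2 hab.le) hab
  · rw [interior_Icc] at ht ⊢
    exact (hg t (hsub (Ioo_subset_Icc_self ht))).mono (Ioo_subset_Icc_self.trans hsub)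
  · rw [interior_Icc] at ht
    exact hw t ht

lemma KPZDomain.ordConnected (ξb : EReal) : (KPZDomain ξb).OrdConnected :=
  ⟨fun _ hx _ hy _ hz => ⟨hx.1.trans hz.1, (EReal.coe_le_coe_iff.2 hz.2).trans_lt hy.2⟩⟩

lemma zero_mem_KPZDomain {ξb : EReal} (h : 0 < ξb) : (0 : ℝ) ∈ KPZDomain ξb :=
  ⟨le_rfl, by exact_mod_cast h⟩

lemma uniqueDiffOn_KPZDomain {ξb : EReal} (h : 0 < ξb) : UniqueDiffOn ℝ (KPZDomain ξb) := by
  obtain ⟨r, hr0, hrξ⟩ := EReal.lt_iff_exists_real_btwn.1 h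
  refine uniqueDiffOn_convex (KPZDomain.ordConnected ξb).convex ⟨r / 2, ?_⟩
  have hr : (0 : ℝ) < r := by exact_mod_cast hr0
  have hsub : Ioo 0 r ⊆ KPZDomain ξb := fun t ht =>
    ⟨ht.1.le, (EReal.coe_lt_coe_iff.2 ht.2).trans hrξ⟩
  exact interior_maximal hsub isOpen_Ioo ⟨by linarith, by linarith⟩

lemma kpz_coeff_pos {q : ℝ} (hq : 2 < q) : 0 < (q - 2) / (2 * (q - 1)) :=
  div_pos (by linarith) (by linarith)

lemma kpz_coeff_lt_half {q : ℝ} (hq : 2 < q) : (q - 2) / (2 * (q - 1)) < 1 / 2 := by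
  rw [div_lt_div_iff₀ (by linarith) (by norm_num)]
  linarith

namespace SolvesKPZProfile

variable {q lam : ℝ} {s : Set ℝ} {f : ℝ → ℝ}

lemma second_deriv_eq (hsol : SolvesKPZProfile q lam s f) {ξ : ℝ} (hξ : ξ ∈ s) :
    derivWithin (derivWithin f s) s ξ = 1 / 2 * ξ * derivWithin f s ξ
      - lam * |derivWithin f s ξ| ^ q - (q - 2) / (2 * (q - 1)) * f ξ := by
  linarith [hsol.2 ξ hξ]

lemma hasDerivWithinAt (hsol : SolvesKPZProfile q lam s f) {ξ : ℝ} (hξ : ξ ∈ s) :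
    HasDerivWithinAt f (derivWithin f s ξ) s ξ :=
  (hsol.1.differentiableOn (by norm_num) ξ hξ).hasDerivWithinAt

lemma hasDerivWithinAt_deriv (hsol : SolvesKPZProfile q lam s f) (hs : UniqueDiffOn ℝ s)
    {ξ : ℝ} (hξ : ξ ∈ s) :
    HasDerivWithinAt (derivWithin f s) (derivWithin (derivWithin f s) s ξ) s ξ :=
  ((hsol.1.derivWithin hs (m := 1) (by norm_num)).differentiableOn (by norm_num) ξ
    hξ).hasDerivWithinAt

lemma continuousOn_second_deriv (hsol : SolvesKPZProfile q lam s f) (hs : UniqueDiffOn ℝ s) :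
    ContinuousOn (derivWithin (derivWithin f s) s) s :=
  (hsol.1.derivWithin hs (m := 1) (by norm_num)).derivWithin hs (m := 0) (by norm_num)
    |>.continuousOn

/-- `f` is only `C²`: `f''` is differentiable because the equation expresses it through `ξ`, `f'`
and `f`, and `|·|^q` is `C¹` for `q > 1`. -/
lemma hasDerivWithinAt_second_deriv (hsol : SolvesKPZProfile q lam s f) (hs : UniqueDiffOn ℝ s)
    (hq : 1 < q) {ξ : ℝ} (hξ : ξ ∈ s) :
    HasDerivWithinAt (derivWithin (derivWithin f s) s)
      ((1 / 2 - (q - 2) / (2 * (q - 1))) * derivWithin f s ξ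
        + (1 / 2 * ξ - lam * (q * |derivWithin f s ξ| ^ (q - 2) * derivWithin f s ξ))
          * derivWithin (derivWithin f s) s ξ) s ξ := by
  set g := derivWithin f s
  have hg := hsol.hasDerivWithinAt_deriv hs hξ
  have hpow := (hasDerivAt_abs_rpow (g ξ) hq).comp_hasDerivWithinAt ξ hg
  have hrhs := ((((hasDerivAt_id ξ).const_mul (1 / 2 : ℝ)).hasDerivWithinAt.mul hg).sub
    (hpow.const_mul lam)).sub ((hsol.hasDerivWithinAt hξ).const_mul ((q - 2) / (2 * (q - 1))))
  refine (hrhs.congr (fun t ht => hsol.second_deriv_eq ht) (hsol.second_deriv_eq hξ)).congr_deriv ?_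
  simp only [id]
  ring

variable (hsol : SolvesKPZProfile q lam s f) (hs : s.OrdConnected) (hs' : UniqueDiffOn ℝ s)
  (h0 : 0 ∈ s) (hq : 2 < q) (hf0 : f 0 < 0) (hg0 : derivWithin f s 0 = 0)
include hsol hs hs' h0 hq hf0 hg0

lemma second_deriv_pos {ξ : ℝ} (hξ : ξ ∈ s) (hξ0 : 0 ≤ ξ) :
    0 < derivWithin (derivWithin f s) s ξ := by
  have hw0 : 0 < derivWithin (derivWithin f s) s 0 := by
    rw [hsol.second_deriv_eq h0, hg0, abs_zero, zero_rpow (by linarith)]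
    nlinarith [kpz_coeff_pos hq]
  set g := derivWithin f s
  set w := derivWithin g s
  by_contra! hwξ
  obtain ⟨ξ₀, ⟨hξ₀pos, hξ₀ξ⟩, hwξ₀, hwpos⟩ := exists_first_zero_of_pos_of_nonpos hξ0
    ((hsol.continuousOn_second_deriv hs').mono (hs.out h0 hξ)) hw0 hwξ
  have hξ₀ : ξ₀ ∈ s := hs.out h0 hξ ⟨hξ₀pos.le, hξ₀ξ⟩
  have hgξ₀ : 0 < g ξ₀ := hg0 ▸ lt_of_hasDerivWithinAt_pos hs h0 hξ₀
    (fun _ => hsol.hasDerivWithinAt_deriv hs')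
    (fun t ht => hwpos t ⟨ht.1.le, ht.2⟩) hξ₀pos
  have hmin : IsMinOn w (Icc 0 ξ₀) ξ₀ := fun t ht => show w ξ₀ ≤ w t by
    rcases ht.2.lt_or_eq with htξ₀ | rfl
    · exact hwξ₀.trans_le (hwpos t ⟨ht.1, htξ₀⟩).le
    · exact le_rfl
  have hL := hmin.hasDerivWithinAt_nonpos_of_right_endpoint hξ₀pos
    ((hsol.hasDerivWithinAt_second_deriv hs' (by linarith) hξ₀).mono (hs.out h0 hξ₀))
  rw [hwξ₀, mul_zero, add_zero] at hL
  nlinarith [kpz_coeff_lt_half hq]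

lemma deriv_pos {ξ : ℝ} (hξ : ξ ∈ s) (hξ0 : 0 < ξ) : 0 < derivWithin f s ξ :=
  hg0 ▸ lt_of_hasDerivWithinAt_pos hs h0 hξ
    (fun _ => hsol.hasDerivWithinAt_deriv hs')
    (fun _ ht => hsol.second_deriv_pos hs hs' h0 hq hf0 hg0 (hs.out h0 hξ (Ioo_subset_Icc_self ht))
      ht.1.le) hξ0

end SolvesKPZProfile

theorem kpz_profile_derivs_pos_general (q lam : ℝ) (hq : 2 < q)
    (ξb : EReal)
    (f : ℝ → ℝ)
    (hsol : SolvesKPZProfile q lam (KPZDomain ξb) f)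
    (hf0 : f 0 = -1)
    (hf'0 : derivWithin f (KPZDomain ξb) 0 = 0) :
    ∀ ξ : ℝ, 0 < ξ → (ξ : EReal) < ξb →
      0 < derivWithin f (KPZDomain ξb) ξ ∧
      0 < derivWithin (derivWithin f (KPZDomain ξb)) (KPZDomain ξb) ξ := by
  intro ξ hξ0 hξb
  have hb : 0 < ξb := (EReal.coe_lt_coe_iff.2 hξ0).trans hξb
  have hξ : ξ ∈ KPZDomain ξb := ⟨hξ0.le, hξb⟩
  have hf0' : f 0 < 0 := by rw [hf0]; norm_num
  exact ⟨hsol.deriv_pos (KPZDomain.ordConnected ξb) (uniqueDiffOn_KPZDomain hb)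
      (zero_mem_KPZDomain hb) hq hf0' hf'0 hξ hξ0,
    hsol.second_deriv_pos (KPZDomain.ordConnected ξb) (uniqueDiffOn_KPZDomain hb)
      (zero_mem_KPZDomain hb) hq hf0' hf'0 hξ hξ0.le⟩

theorem kpz_profile_derivs_pos (q lam : ℝ) (hq : 2 < q) (hlam : 0 < lam)
    (ξb : EReal) (hξb : 0 < ξb)
    (f : ℝ → ℝ)
    (hsol : SolvesKPZProfile q lam (KPZDomain ξb) f)
    (hf0 : f 0 = -1)
    (hf'0 : derivWithin f (KPZDomain ξb) 0 = 0) :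
    ∀ ξ : ℝ, 0 < ξ → (ξ : EReal) < ξb →
      0 < derivWithin f (KPZDomain ξb) ξ ∧
      0 < derivWithin (derivWithin f (KPZDomain ξb)) (KPZDomain ξb) ξ :=
  kpz_profile_derivs_pos_general q lam hq ξb f hsol hf0 hf'0
end

section
/- Let q > 2, λ > 0, and let f : [0,∞) → ℝ be a twice continuously differentiable solution of the ODE f''(ξ) + λ|f'(ξ)|^q − (1/2)ξ f'(ξ) + ((q−2)/(2(q−1))) f(ξ) = 0 on [0,∞) with f(0) = −1 and f'(0) = 0. Then there exists ξ₀ > 0 such that f'(ξ) < (ξ/(2λ))^{1/(q−1)} for all ξ ≥ ξ₀. -/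
/-!
Write `p = f'`. The equation reads `p' = -λ|p|^q + ξ p / 2 - c f` with `c = (q-2)/(2(q-1)) > 0`,
and differentiating it once more at a critical point of `p` gives `p'' = p / (2(q-1))`. So `p` has
no negative interior local minimum and no positive interior local maximum. Since `p 0 = 0`, either
`p` becomes negative and then stays negative, or `p ≥ 0` and `p` is nondecreasing. In the latter
case either `p ≡ 0`, or `p ≥ m > 0` eventually, so `f → ∞`; wherever `f > 0` and `p' ≥ 0` the
equation forces `λ|p|^q < ξ p / 2`, that is `p < (ξ/(2λ))^(1/(q-1))`.
-/

open Set Filter Topology Real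

theorem not_isLocalMin_of_deriv_deriv_neg {f : ℝ → ℝ} {x₀ : ℝ} (hf : deriv (deriv f) x₀ < 0)
    (hd : deriv f x₀ = 0) (hc : ContinuousAt f x₀) : ¬ IsLocalMin f x₀ := by
  intro hmin
  have hconst : f =ᶠ[𝓝 x₀] fun _ ↦ f x₀ :=
    (hmin.and (isLocalMax_of_deriv_deriv_neg hf hd hc)).mono fun _ h ↦ le_antisymm h.2 h.1
  have hderiv : deriv f =ᶠ[𝓝 x₀] fun _ ↦ 0 :=
    hconst.eventuallyEq_nhds.mono fun _ h ↦ by rw [h.deriv_eq, deriv_const]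
  rw [hderiv.deriv_eq, deriv_const] at hf
  exact hf.false

theorem not_isLocalMax_of_deriv_deriv_pos {f : ℝ → ℝ} {x₀ : ℝ} (hf : 0 < deriv (deriv f) x₀)
    (hd : deriv f x₀ = 0) (hc : ContinuousAt f x₀) : ¬ IsLocalMax f x₀ := fun hmax ↦
  not_isLocalMin_of_deriv_deriv_neg (f := -f) (by simpa [deriv.neg'] using hf)
    (by simpa [deriv.neg'] using hd) hc.neg hmax.neg

theorem exists_isLocalMin_mem_Ioo_le {f : ℝ → ℝ} {a b c : ℝ} (hf : ContinuousOn f (Icc a c))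
    (hb : b ∈ Icc a c) (ha : f b < f a) (hc : f b < f c) :
    ∃ x ∈ Ioo a c, IsLocalMin f x ∧ f x ≤ f b := by
  obtain ⟨x, hx, hmin⟩ := isCompact_Icc.exists_isMinOn_mem_subset (s := Ioo a c) hf hb <| by
    rw [Icc_sdiff_Ioo_same (hb.1.trans hb.2)]
    rintro z (rfl | rfl) <;> assumption
  exact ⟨x, hx, hmin.isLocalMin (Icc_mem_nhds hx.1 hx.2), hmin hb⟩

theorem exists_isLocalMax_mem_Ioo_le {f : ℝ → ℝ} {a b c : ℝ} (hf : ContinuousOn f (Icc a c))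
    (hb : b ∈ Icc a c) (ha : f a < f b) (hc : f c < f b) :
    ∃ x ∈ Ioo a c, IsLocalMax f x ∧ f b ≤ f x := by
  obtain ⟨x, hx, hmax⟩ := isCompact_Icc.exists_isMaxOn_mem_subset (s := Ioo a c) hf hb <| by
    rw [Icc_sdiff_Ioo_same (hb.1.trans hb.2)]
    rintro z (rfl | rfl) <;> assumption
  exact ⟨x, hx, hmax.isLocalMax (Icc_mem_nhds hx.1 hx.2), hmax hb⟩

theorem tendsto_atTop_of_hasDerivAt_ge {f f' : ℝ → ℝ} {b m : ℝ} (hm : 0 < m)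
    (hf : ∀ x ≥ b, HasDerivAt f (f' x) x) (hf' : ∀ x ≥ b, m ≤ f' x) :
    Tendsto f atTop atTop := by
  have hlin : ∀ x ≥ b, f b + m * (x - b) ≤ f x := by
    have := (convex_Ici b).mul_sub_le_image_sub_of_le_deriv
      (fun x hx ↦ (hf x hx).continuousAt.continuousWithinAt)
      (fun x hx ↦ (hf x (interior_subset hx)).differentiableAt.differentiableWithinAt)
      (C := m) fun x hx ↦ (hf x (interior_subset hx)).deriv ▸ hf' x (interior_subset hx)
    intro x hx
    linarith [this b self_mem_Ici x hx hx]
  refine tendsto_atTop_mono' atTop (eventually_ge_atTop b |>.mono hlin) ?_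
  exact tendsto_atTop_add_const_left _ _ <|
    (tendsto_atTop_add_const_right _ (-b) tendsto_id).const_mul_atTop hm

theorem lt_rpow_of_mul_abs_rpow_lt {x ξ lam q : ℝ} (hξ : 0 ≤ ξ) (hlam : 0 < lam) (hq : 1 < q)
    (h : lam * |x| ^ q < ξ / 2 * x) : x < (ξ / (2 * lam)) ^ (1 / (q - 1)) := by
  have hx : 0 < x := by
    by_contra! hx
    nlinarith [mul_nonneg hlam.le (rpow_nonneg (abs_nonneg x) q)]
  have hpow : x ^ (q - 1) < ξ / (2 * lam) := by
    rw [abs_of_pos hx, show q = q - 1 + 1 by ring, rpow_add_one hx.ne'] at h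
    rw [lt_div_iff₀ (by positivity)]
    nlinarith
  rw [one_div, lt_rpow_inv_iff_of_pos hx.le (by positivity) (by linarith)]
  exact hpow

namespace SolvesKPZProfile

variable {q lam ξ : ℝ} {f : ℝ → ℝ}

theorem hasDerivAt (hsol : SolvesKPZProfile q lam (Ici 0) f) (hξ : 0 < ξ) :
    HasDerivAt f (derivWithin f (Ici 0) ξ) ξ :=
  ((hsol.1.differentiableOn two_ne_zero) ξ hξ.le).hasDerivWithinAt.hasDerivAt (Ici_mem_nhds hξ)

theorem contDiffOn_derivWithin (hsol : SolvesKPZProfile q lam (Ici 0) f) :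
    ContDiffOn ℝ 1 (derivWithin f (Ici 0)) (Ici 0) :=
  hsol.1.derivWithin (uniqueDiffOn_Ici 0) (by norm_num)

theorem hasDerivAt_derivWithin (hsol : SolvesKPZProfile q lam (Ici 0) f) (hξ : 0 < ξ) :
    HasDerivAt (derivWithin f (Ici 0)) (deriv (derivWithin f (Ici 0)) ξ) ξ :=
  ((hsol.contDiffOn_derivWithin.differentiableOn one_ne_zero).differentiableAt
    (Ici_mem_nhds hξ)).hasDerivAt

theorem deriv_derivWithin_eq (hsol : SolvesKPZProfile q lam (Ici 0) f) (hξ : 0 < ξ) :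
    deriv (derivWithin f (Ici 0)) ξ = -(lam * |derivWithin f (Ici 0) ξ| ^ q)
      + ξ / 2 * derivWithin f (Ici 0) ξ - (q - 2) / (2 * (q - 1)) * f ξ := by
  have h := hsol.2 ξ hξ.le
  rw [derivWithin_of_mem_nhds (Ici_mem_nhds hξ)] at h
  linarith

theorem deriv_deriv_derivWithin_of_deriv_eq_zero (hsol : SolvesKPZProfile q lam (Ici 0) f)
    (hq : 1 < q) (hξ : 0 < ξ) (hcrit : deriv (derivWithin f (Ici 0)) ξ = 0) :
    deriv (deriv (derivWithin f (Ici 0))) ξ = derivWithin f (Ici 0) ξ / (2 * (q - 1)) := by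
  set p := derivWithin f (Ici 0)
  have hp : HasDerivAt p 0 ξ := hcrit ▸ hsol.hasDerivAt_derivWithin hξ
  have habs : HasDerivAt (fun x ↦ |p x| ^ q) 0 ξ := by
    have h := (hasDerivAt_abs_rpow (p ξ) hq).comp ξ hp
    rwa [mul_zero] at h
  set c := (q - 2) / (2 * (q - 1)) with hc
  have hrhs : HasDerivAt (fun x ↦ -(lam * |p x| ^ q) + x / 2 * p x - c * f x)
      (p ξ / 2 - c * p ξ) ξ :=
    (((habs.const_mul lam).neg.add (((hasDerivAt_id' ξ).div_const 2).mul hp)).sub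
      ((hsol.hasDerivAt hξ).const_mul c)).congr_deriv (by ring)
  have hode : deriv p =ᶠ[𝓝 ξ] fun x ↦ -(lam * |p x| ^ q) + x / 2 * p x - c * f x :=
    eventually_of_mem (Ioi_mem_nhds hξ) fun x hx ↦ hsol.deriv_derivWithin_eq hx
  rw [hode.deriv_eq, hrhs.deriv, hc]
  have hq1 : q - 1 ≠ 0 := by linarith
  field_simp
  ring

theorem not_isLocalMin_derivWithin (hsol : SolvesKPZProfile q lam (Ici 0) f) (hq : 1 < q)
    (hξ : 0 < ξ) (hneg : derivWithin f (Ici 0) ξ < 0) : ¬ IsLocalMin (derivWithin f (Ici 0)) ξ :=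
  fun hmin ↦ not_isLocalMin_of_deriv_deriv_neg
    (by rw [hsol.deriv_deriv_derivWithin_of_deriv_eq_zero hq hξ hmin.deriv_eq_zero]
        exact div_neg_of_neg_of_pos hneg (by linarith))
    hmin.deriv_eq_zero (hsol.hasDerivAt_derivWithin hξ).continuousAt hmin

theorem not_isLocalMax_derivWithin (hsol : SolvesKPZProfile q lam (Ici 0) f) (hq : 1 < q)
    (hξ : 0 < ξ) (hpos : 0 < derivWithin f (Ici 0) ξ) : ¬ IsLocalMax (derivWithin f (Ici 0)) ξ :=
  fun hmax ↦ not_isLocalMax_of_deriv_deriv_pos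
    (by rw [hsol.deriv_deriv_derivWithin_of_deriv_eq_zero hq hξ hmax.deriv_eq_zero]
        exact div_pos hpos (by linarith))
    hmax.deriv_eq_zero (hsol.hasDerivAt_derivWithin hξ).continuousAt hmax

theorem derivWithin_neg_of_le (hsol : SolvesKPZProfile q lam (Ici 0) f) (hq : 1 < q) {b : ℝ}
    (hp0 : 0 ≤ derivWithin f (Ici 0) 0) (hb : 0 ≤ b) (hpb : derivWithin f (Ici 0) b < 0)
    (hbξ : b ≤ ξ) : derivWithin f (Ici 0) ξ < 0 := by
  by_contra! hξ
  obtain ⟨x, hx, hmin, hxb⟩ := exists_isLocalMin_mem_Ioo_le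
    (hsol.contDiffOn_derivWithin.continuousOn.mono Icc_subset_Ici_self) ⟨hb, hbξ⟩
    (hpb.trans_le hp0) (hpb.trans_le hξ)
  exact hsol.not_isLocalMin_derivWithin hq hx.1 (hxb.trans_lt hpb) hmin

theorem monotoneOn_derivWithin (hsol : SolvesKPZProfile q lam (Ici 0) f) (hq : 1 < q)
    (hp0 : derivWithin f (Ici 0) 0 ≤ 0) (hnonneg : ∀ ξ > 0, 0 ≤ derivWithin f (Ici 0) ξ) :
    MonotoneOn (derivWithin f (Ici 0)) (Ioi 0) := by
  intro x hx y hy hxy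
  by_contra! hlt
  obtain ⟨z, hz, hmax, hxz⟩ := exists_isLocalMax_mem_Ioo_le
    (hsol.contDiffOn_derivWithin.continuousOn.mono Icc_subset_Ici_self)
    ⟨(mem_Ioi.1 hx).le, hxy⟩ (hp0.trans_lt ((hnonneg y hy).trans_lt hlt)) hlt
  exact hsol.not_isLocalMax_derivWithin hq hz.1 ((hnonneg y hy).trans_lt (hlt.trans_le hxz)) hmax

theorem derivWithin_lt_of_deriv_nonneg (hsol : SolvesKPZProfile q lam (Ici 0) f) (hq : 2 < q)
    (hlam : 0 < lam) (hξ : 0 < ξ) (hfξ : 0 < f ξ)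
    (hderiv : 0 ≤ deriv (derivWithin f (Ici 0)) ξ) :
    derivWithin f (Ici 0) ξ < (ξ / (2 * lam)) ^ (1 / (q - 1)) := by
  have hcf : 0 < (q - 2) / (2 * (q - 1)) * f ξ := mul_pos (div_pos (by linarith) (by linarith)) hfξ
  refine lt_rpow_of_mul_abs_rpow_lt hξ.le hlam (by linarith) ?_
  linarith [hsol.deriv_derivWithin_eq hξ]

end SolvesKPZProfile

theorem kpz_profile_deriv_upper_bound_general (q lam : ℝ) (hq : 2 < q) (hlam : 0 < lam)
    (f : ℝ → ℝ)
    (hsol : SolvesKPZProfile q lam (Set.Ici 0) f)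
    (hf'0 : derivWithin f (Set.Ici 0) 0 = 0) :
    ∃ ξ₀ : ℝ, 0 < ξ₀ ∧ ∀ ξ : ℝ, ξ₀ ≤ ξ →
      derivWithin f (Set.Ici 0) ξ < (ξ / (2 * lam)) ^ (1 / (q - 1)) := by
  have hq1 : 1 < q := by linarith
  have hbound_pos : ∀ ξ > 0, 0 < (ξ / (2 * lam)) ^ (1 / (q - 1)) := fun ξ hξ ↦
    rpow_pos_of_pos (by positivity) _
  suffices h : ∀ᶠ ξ in atTop, derivWithin f (Ici 0) ξ < (ξ / (2 * lam)) ^ (1 / (q - 1)) by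
    obtain ⟨a, ha⟩ := eventually_atTop.1 h
    exact ⟨max a 1, by positivity, fun ξ hξ ↦ ha ξ (le_of_max_le_left hξ)⟩
  by_cases hneg : ∃ b ≥ 0, derivWithin f (Ici 0) b < 0
  · obtain ⟨b, hb, hpb⟩ := hneg
    filter_upwards [eventually_ge_atTop b, eventually_gt_atTop 0] with ξ hbξ hξ
    exact (hsol.derivWithin_neg_of_le hq1 hf'0.ge hb hpb hbξ).trans (hbound_pos ξ hξ)
  push Not at hneg
  have hmono := hsol.monotoneOn_derivWithin hq1 hf'0.le fun ξ hξ ↦ hneg ξ hξ.le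
  by_cases hpos : ∃ b > 0, 0 < derivWithin f (Ici 0) b
  · obtain ⟨b, hb, hpb⟩ := hpos
    have hf : Tendsto f atTop atTop := tendsto_atTop_of_hasDerivAt_ge hpb
      (fun x hx ↦ hsol.hasDerivAt (hb.trans_le hx)) fun x hx ↦ hmono hb (hb.trans_le hx) hx
    filter_upwards [hf.eventually_gt_atTop 0, eventually_gt_atTop 0] with ξ hfξ hξ
    refine hsol.derivWithin_lt_of_deriv_nonneg hq hlam hξ hfξ ?_
    rw [← derivWithin_of_isOpen isOpen_Ioi hξ]
    exact hmono.derivWithin_nonneg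
  · push Not at hpos
    filter_upwards [eventually_gt_atTop 0] with ξ hξ
    exact (hpos ξ hξ).trans_lt (hbound_pos ξ hξ)

theorem kpz_profile_deriv_upper_bound (q lam : ℝ) (hq : 2 < q) (hlam : 0 < lam)
    (f : ℝ → ℝ)
    (hsol : SolvesKPZProfile q lam (Set.Ici 0) f)
    (hf0 : f 0 = -1)
    (hf'0 : derivWithin f (Set.Ici 0) 0 = 0) :
    ∃ ξ₀ : ℝ, 0 < ξ₀ ∧ ∀ ξ : ℝ, ξ₀ ≤ ξ →
      derivWithin f (Set.Ici 0) ξ < (ξ / (2 * lam)) ^ (1 / (q - 1)) :=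
  kpz_profile_deriv_upper_bound_general q lam hq hlam f hsol hf'0
end

section
/- Let q > 2, λ > 0, and let f be a twice continuously differentiable solution of the ODE f''(ξ) + λ|f'(ξ)|^q − (1/2)ξ f'(ξ) + ((q−2)/(2(q−1))) f(ξ) = 0 with f(0) = −1 and f'(0) = 0, defined on its maximal interval of existence [0, ξ̄). Then ξ̄ = ∞; that is, the solution of this initial value problem exists globally on [0,∞). -/
/-
Write the equation as `f'' = ξ f' / 2 - λ |f'| ^ q - c f` with `c = (q - 2) / (2 (q - 1))`,
so that `0 < c < 1/2`. Then `f''(0) = c > 0`, and at a first zero `τ` of `f''` we would have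
`f'(τ) > 0` and `f'''(τ) = (1/2 - c) f'(τ) > 0`, which is impossible. Hence `f'' > 0`, so `f' ≥ 0`
and `f ≥ -1`. On a bounded interval `[0, b)` this gives `f'' ≤ (b / 2) f' + c`, so by Grönwall
`f'`, and then `f`, are bounded; being monotone they have limits at `b`. Local existence at
`(b, f(b⁻), f'(b⁻))`, together with local uniqueness, continues the solution beyond `b`,
contradicting maximality.
-/

open Set Filter Topology Real

theorem pos_of_deriv_pos_of_eq_zero {w : ℝ → ℝ} {a b : ℝ} (hw : ContinuousOn w (Ico a b))
    (ha : 0 < w a) (h : ∀ x ∈ Ioo a b, w x = 0 → (∀ y ∈ Ico a x, 0 < w y) → 0 < deriv w x) :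
    ∀ x ∈ Ico a b, 0 < w x := by
  by_contra! ⟨x, hx, hwx⟩
  set S := Icc a x ∩ w ⁻¹' Iic 0
  have hSx : x ∈ S := ⟨⟨hx.1, le_rfl⟩, hwx⟩
  have hS : IsClosed S := (hw.mono (Icc_subset_Ico_right hx.2)).preimage_isClosed_of_isClosed
    isClosed_Icc isClosed_Iic
  have hSbdd : BddBelow S := ⟨a, fun y hy => hy.1.1⟩
  set τ := sInf S
  have hτS : τ ∈ S := hS.csInf_mem ⟨x, hSx⟩ hSbdd
  have hpos : ∀ y ∈ Ico a τ, 0 < w y := fun y hy => by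
    by_contra! hwy
    exact hy.2.not_ge (csInf_le hSbdd ⟨⟨hy.1, hy.2.le.trans hτS.1.2⟩, hwy⟩)
  have haτ : a < τ := hτS.1.1.lt_of_ne fun haτ => (haτ ▸ hτS.2).not_gt ha
  have hwτ : w τ = 0 := by
    obtain ⟨y, hy, hwy⟩ := intermediate_value_Icc' hτS.1.1
      (hw.mono (Icc_subset_Ico_right (hτS.1.2.trans_lt hx.2))) ⟨hτS.2, ha.le⟩
    have hyS : y ∈ S := ⟨⟨hy.1, hy.2.trans hτS.1.2⟩, hwy.le⟩
    rwa [le_antisymm hy.2 (csInf_le hSbdd hyS)] at hwy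
  have hsign := eventually_nhdsWithin_sign_eq_of_deriv_pos
    (h τ ⟨haτ, hτS.1.2.trans_lt hx.2⟩ hwτ hpos) hwτ
  obtain ⟨y, hy, hya⟩ := ((hsign.filter_mono nhdsWithin_le_nhds).and (Ioo_mem_nhdsLT haτ)).exists
  rw [sign_pos (hpos y ⟨hya.1.le, hya.2⟩), sign_neg (sub_neg.2 hya.2)] at hy
  exact absurd hy (by decide)

theorem bddAbove_image_Ico_of_hasDerivWithinAt_le {g g' : ℝ → ℝ} {a b K ε : ℝ}
    (hg : ∀ x ∈ Ico a b, HasDerivWithinAt g (g' x) (Ico a b) x)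
    (bound : ∀ x ∈ Ico a b, g' x ≤ K * g x + ε) : BddAbove (g '' Ico a b) := by
  have hcont : Continuous (gronwallBound (g a) K ε) := continuous_iff_continuousAt.2 fun x =>
    (hasDerivAt_gronwallBound _ _ _ x).continuousAt
  obtain ⟨M, hM⟩ := (isCompact_Icc (a := 0) (b := b - a)).bddAbove_image hcont.continuousOn
  refine ⟨M, ?_⟩
  rintro _ ⟨x, hx, rfl⟩
  have hsub : Icc a x ⊆ Ico a b := Icc_subset_Ico_right hx.2
  have hgron := le_gronwallBound_of_liminf_deriv_right_le
    ((HasDerivWithinAt.continuousOn hg).mono hsub)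
    (fun y hy _ hr => ((hg y (hsub (Ico_subset_Icc_self hy))).mono_of_mem_nhdsWithin
      (mem_of_superset (Ico_mem_nhdsGE (hy.2.trans hx.2)) (Ico_subset_Ico_left hy.1))
      ).liminf_right_slope_le hr)
    le_rfl (fun y hy => bound y (hsub (Ico_subset_Icc_self hy))) x ⟨hx.1, le_rfl⟩
  exact hgron.trans (hM ⟨x - a, ⟨by linarith [hx.1], by linarith [hx.2]⟩, rfl⟩)

theorem monotoneOn_Ico_of_hasDerivWithinAt_nonneg {g g' : ℝ → ℝ} {a b : ℝ}
    (hg : ∀ x ∈ Ico a b, HasDerivWithinAt g (g' x) (Ico a b) x) (hg' : ∀ x ∈ Ico a b, 0 ≤ g' x) :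
    MonotoneOn g (Ico a b) :=
  monotoneOn_of_hasDerivWithinAt_nonneg (convex_Ico a b) (HasDerivWithinAt.continuousOn hg)
    (by simpa only [interior_Ico] using fun x hx =>
      (hg x (Ioo_subset_Ico_self hx)).mono Ioo_subset_Ico_self)
    (by simpa only [interior_Ico] using fun x hx => hg' x (Ioo_subset_Ico_self hx))

section Continuation

variable {E : Type*} [NormedAddCommGroup E] [NormedSpace ℝ E]
  {F : E → E} {Z Y : ℝ → E} {b : ℝ} {z : E}

theorem hasDerivWithinAt_update_Iic_of_tendsto (hF : Continuous F)
    (hZ : ∀ᶠ t in 𝓝[<] b, HasDerivAt Z (F (Z t)) t) (hlim : Tendsto Z (𝓝[<] b) (𝓝 z)) :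
    HasDerivWithinAt (Function.update Z b z) (F z) (Iic b) b := by
  have hZb : ∀ᶠ t in 𝓝[<] b, t < b ∧ HasDerivAt Z (F (Z t)) t :=
    eventually_mem_nhdsWithin.and hZ
  have hupdate : ∀ {t}, t < b → Function.update Z b z =ᶠ[𝓝 t] Z := fun ht =>
    (eventually_ne_nhds ht.ne).mono fun s hs => Function.update_of_ne hs _ _
  refine hasDerivWithinAt_Iic_of_tendsto_deriv (s := {t | t < b ∧ HasDerivAt Z (F (Z t)) t})
    (fun t ht =>
      (ht.2.congr_of_eventuallyEq (hupdate ht.1)).differentiableAt.differentiableWithinAt)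
    ?_ hZb ?_
  · rw [ContinuousWithinAt, Function.update_self]
    refine (hlim.mono_left (nhdsWithin_mono _ fun t ht => ht.1)).congr' ?_
    filter_upwards [self_mem_nhdsWithin] with t ht
    exact (hupdate ht.1).eq_of_nhds.symm
  · refine ((hF.tendsto z).comp hlim).congr' ?_
    filter_upwards [hZb] with t ht
    exact ((ht.2.congr_of_eventuallyEq (hupdate ht.1)).deriv).symm

theorem ODE_solution_eventuallyEq_nhdsLT_of_tendsto (hF : ContDiff ℝ 1 F)
    (hZ : ∀ᶠ t in 𝓝[<] b, HasDerivAt Z (F (Z t)) t) (hlim : Tendsto Z (𝓝[<] b) (𝓝 z))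
    (hY : ∀ᶠ t in 𝓝 b, HasDerivAt Y (F (Y t)) t) (hYb : Y b = z) :
    Z =ᶠ[𝓝[<] b] Y := by
  obtain ⟨K, U, hU, hK⟩ := (hF.contDiffAt (x := z)).exists_lipschitzOnWith
  set Zb := Function.update Z b z
  have hZbb : Zb b = z := Function.update_self ..
  have hZb_b : HasDerivWithinAt Zb (F z) (Iic b) b :=
    hasDerivWithinAt_update_Iic_of_tendsto hF.continuous hZ hlim
  have hZbU : ∀ᶠ t in 𝓝[≤] b, Zb t ∈ U :=
    hZb_b.continuousWithinAt.tendsto.eventually (hZbb ▸ hU)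
  have hYU : ∀ᶠ t in 𝓝 b, Y t ∈ U :=
    hY.self_of_nhds.continuousAt.tendsto.eventually (hYb ▸ hU)
  have hgood : ∀ᶠ t in 𝓝[<] b, t < b ∧ HasDerivAt Z (F (Z t)) t ∧ Zb t ∈ U ∧
      HasDerivAt Y (F (Y t)) t ∧ Y t ∈ U :=
    eventually_mem_nhdsWithin.and <| hZ.and <|
      (hZbU.filter_mono (nhdsWithin_mono _ Iio_subset_Iic_self)).and <|
      nhdsWithin_le_nhds (hY.and hYU)
  obtain ⟨T, hTb : T < b, hT⟩ := mem_nhdsLT_iff_exists_Ioo_subset.1 hgood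
  have hZb_at : ∀ t ∈ Ioo T b, HasDerivAt Zb (F (Zb t)) t := fun t ht => by
    have hZbZ : Zb =ᶠ[𝓝 t] Z := (eventually_ne_nhds ht.2.ne).mono
      fun s hs => Function.update_of_ne hs _ _
    rw [hZbZ.eq_of_nhds]
    exact (hT ht).2.1.congr_of_eventuallyEq hZbZ
  have hZb_Ioc : ∀ t ∈ Ioc T b, HasDerivWithinAt Zb (F (Zb t)) (Iic t) t ∧ Zb t ∈ U := by
    rintro t ⟨hTt, htb⟩
    rcases htb.lt_or_eq with htb | rfl
    · exact ⟨(hZb_at t ⟨hTt, htb⟩).hasDerivWithinAt, (hT ⟨hTt, htb⟩).2.2.1⟩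
    · exact ⟨hZbb ▸ hZb_b, hZbb ▸ mem_of_mem_nhds hU⟩
  have hY_Ioc : ∀ t ∈ Ioc T b, HasDerivAt Y (F (Y t)) t ∧ Y t ∈ U := by
    rintro t ⟨hTt, htb⟩
    rcases htb.lt_or_eq with htb | rfl
    · exact ⟨(hT ⟨hTt, htb⟩).2.2.2.1, (hT ⟨hTt, htb⟩).2.2.2.2⟩
    · exact ⟨hY.self_of_nhds, hYb ▸ mem_of_mem_nhds hU⟩
  obtain ⟨T', hTT', hT'b⟩ := exists_between hTb
  have hsub : Icc T' b ⊆ Ioc T b := Icc_subset_Ioc_iff hT'b.le |>.2 ⟨hTT', le_rfl⟩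
  have huniq : EqOn Zb Y (Icc T' b) := by
    refine ODE_solution_unique_of_mem_Icc_left (v := fun _ => F) (s := fun _ => U)
      (fun _ _ => hK) ?_ (fun t ht => (hZb_Ioc t (hsub (Ioc_subset_Icc_self ht))).1)
      (fun t ht => (hZb_Ioc t (hsub (Ioc_subset_Icc_self ht))).2)
      (fun t ht => (hY_Ioc t (hsub ht)).1.continuousAt.continuousWithinAt)
      (fun t ht => (hY_Ioc t (hsub (Ioc_subset_Icc_self ht))).1.hasDerivWithinAt)
      (fun t ht => (hY_Ioc t (hsub (Ioc_subset_Icc_self ht))).2) (hZbb.trans hYb.symm)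
    intro t ht
    rcases ht.2.lt_or_eq with htb | rfl
    · exact (hZb_at t ⟨(hsub ht).1, htb⟩).continuousAt.continuousWithinAt
    · exact hZb_b.continuousWithinAt.mono fun s hs => hs.2
  filter_upwards [Ioo_mem_nhdsLT hT'b] with t ht
  rw [← Function.update_of_ne ht.2.ne z Z]
  exact huniq (Ioo_subset_Icc_self ht)

theorem exists_extension_of_tendsto [CompleteSpace E] (hF : ContDiff ℝ 1 F) {a : ℝ}
    (hab : a < b)
    (hZ : ∀ t ∈ Ico a b, HasDerivWithinAt Z (F (Z t)) (Ico a b) t)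
    (hlim : Tendsto Z (𝓝[<] b) (𝓝 z)) :
    ∃ c > b, ∃ Y : ℝ → E, EqOn Y Z (Ico a b) ∧
      ∀ t ∈ Ico a c, HasDerivWithinAt Y (F (Y t)) (Ico a c) t := by
  obtain ⟨Y₀, hY₀b, ε, hε, hY₀⟩ :=
    (hF.contDiffAt (x := z)).exists_forall_mem_closedBall_exists_eq_forall_mem_Ioo_hasDerivAt₀ b
  have hZ_at : ∀ t ∈ Ioo a b, HasDerivAt Z (F (Z t)) t := fun t ht =>
    (hZ t (Ioo_subset_Ico_self ht)).hasDerivAt (Ico_mem_nhds ht.1 ht.2)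
  have hagree : ∀ᶠ t in 𝓝[<] b, Z t = Y₀ t ∧ b - ε < t :=
    (ODE_solution_eventuallyEq_nhdsLT_of_tendsto hF
      (eventually_of_mem (Ioo_mem_nhdsLT hab) hZ_at) hlim
      (eventually_of_mem (Ioo_mem_nhds (by linarith) (by linarith)) hY₀) hY₀b).and
      (eventually_of_mem (Ioo_mem_nhdsLT (by linarith)) fun t ht => ht.1)
  obtain ⟨T, hTb : T < b, hT⟩ := mem_nhdsLT_iff_exists_Ioo_subset.1 hagree
  set Y : ℝ → E := fun t => if t < b then Z t else Y₀ t
  have hYY₀ : EqOn Y Y₀ (Ioo T (b + ε)) := fun t ht => by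
    by_cases htb : t < b
    · exact (if_pos htb).trans (hT ⟨ht.1, htb⟩).1
    · exact if_neg htb
  have hY_at : ∀ t ∈ Ioo T (b + ε), HasDerivAt Y (F (Y t)) t := fun t ht => by
    have hεt : b - ε < t := by
      by_cases htb : t < b
      · exact (hT ⟨ht.1, htb⟩).2
      · linarith
    rw [hYY₀ ht]
    exact (hY₀ t ⟨hεt, ht.2⟩).congr_of_eventuallyEq
      (eventually_of_mem (isOpen_Ioo.mem_nhds ht) hYY₀)
  refine ⟨b + ε, by linarith, Y, fun t ht => if_pos ht.2, fun t ht => ?_⟩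
  by_cases htb : t < b
  · have hYZ : Y =ᶠ[𝓝 t] Z := eventually_of_mem (Iio_mem_nhds htb) fun s hs => if_pos hs
    have hsub : Ico a b ∈ 𝓝[Ico a (b + ε)] t :=
      mem_nhdsWithin.2 ⟨Iio b, isOpen_Iio, htb, fun s hs => ⟨hs.2.1, hs.1⟩⟩
    rw [hYZ.eq_of_nhds]
    exact ((hZ t ⟨ht.1, htb⟩).mono_of_mem_nhdsWithin hsub).congr_of_eventuallyEq
      (nhdsWithin_le_nhds hYZ) hYZ.eq_of_nhds
  · exact (hY_at t ⟨by linarith, ht.2⟩).hasDerivWithinAt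

theorem exists_extension_of_tendsto_nonautonomous [CompleteSpace E] {F : ℝ → E → E}
    (hF : ContDiff ℝ 1 (Function.uncurry F)) {a : ℝ} (hab : a < b)
    (hZ : ∀ t ∈ Ico a b, HasDerivWithinAt Z (F t (Z t)) (Ico a b) t)
    (hlim : Tendsto Z (𝓝[<] b) (𝓝 z)) :
    ∃ c > b, ∃ Y : ℝ → E, EqOn Y Z (Ico a b) ∧
      ∀ t ∈ Ico a c, HasDerivWithinAt Y (F t (Y t)) (Ico a c) t := by
  obtain ⟨c, hbc, W, hWZ, hW⟩ := exists_extension_of_tendsto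
    (F := fun p : ℝ × E => ((1 : ℝ), F p.1 p.2)) (Z := fun t => (t, Z t)) (z := (b, z))
    (contDiff_const.prodMk hF) hab (fun t ht => (hasDerivWithinAt_id t _).prodMk (hZ t ht))
    ((tendsto_id.mono_left nhdsWithin_le_nhds).prodMk_nhds hlim)
  have htime : ∀ t ∈ Ico a c, (W t).1 = t := fun t ht =>
    eq_of_has_deriv_right_eq (f' := fun _ => (1 : ℝ))
      (fun s hs => (hasFDerivAt_fst.comp_hasDerivWithinAt s
        (hW s ⟨hs.1, hs.2.trans ht.2⟩)).mono_of_mem_nhdsWithin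
        (mem_of_superset (Ico_mem_nhdsGE (hs.2.trans ht.2)) (Ico_subset_Ico_left hs.1)))
      (fun s _ => hasDerivWithinAt_id s _)
      (fun s hs => ((hW s ⟨hs.1, hs.2.trans_lt ht.2⟩).continuousWithinAt.fst).mono
        fun r hr => ⟨hr.1, hr.2.trans_lt ht.2⟩)
      continuousOn_id (by simp [hWZ ⟨le_rfl, hab⟩]) t ⟨ht.1, le_rfl⟩
  refine ⟨c, hbc, fun t => (W t).2, fun t ht => by simp [hWZ ht], fun t ht => ?_⟩
  simpa [htime t ht, Function.comp_def] using hasFDerivAt_snd.comp_hasDerivWithinAt t (hW t ht)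

end Continuation

theorem contDiff_abs_rpow {q : ℝ} (hq : 1 < q) : ContDiff ℝ 1 fun p : ℝ => |p| ^ q := by
  simpa only [Real.norm_eq_abs] using contDiff_norm_rpow (E := ℝ) hq

/-- The profile equation solved for `f''`: `f'' = kpzRhs q lam ξ f f'`. -/
noncomputable def kpzRhs (q lam ξ y p : ℝ) : ℝ :=
  ξ / 2 * p - lam * |p| ^ q - (q - 2) / (2 * (q - 1)) * y

noncomputable def kpzField (q lam ξ : ℝ) (z : ℝ × ℝ) : ℝ × ℝ := (z.2, kpzRhs q lam ξ z.1 z.2)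

section KPZ

variable {q lam : ℝ}

theorem contDiff_kpzField (hq : 1 < q) : ContDiff ℝ 1 (Function.uncurry (kpzField q lam)) := by
  unfold Function.uncurry kpzField kpzRhs
  have hp : ContDiff ℝ 1 fun x : ℝ × ℝ × ℝ => x.2.2 := contDiff_snd.snd
  exact hp.prodMk ((((contDiff_fst.div_const 2).mul hp).sub
    (contDiff_const.mul ((contDiff_abs_rpow hq).comp hp))).sub
    (contDiff_const.mul contDiff_snd.fst))

theorem ContinuousOn.kpzRhs {s : Set ℝ} {g p : ℝ → ℝ} (hq : 1 < q) (hg : ContinuousOn g s)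
    (hp : ContinuousOn p s) : ContinuousOn (fun t => kpzRhs q lam t (g t) (p t)) s :=
  (((continuousOn_id.div_const 2).mul hp).sub (continuousOn_const.mul
    ((contDiff_abs_rpow hq).continuous.comp_continuousOn hp))).sub (continuousOn_const.mul hg)

theorem SolvesKPZProfile.hasDerivWithinAt_derivWithin {s : Set ℝ} {f : ℝ → ℝ}
    (h : SolvesKPZProfile q lam s f) (hs : UniqueDiffOn ℝ s) {t : ℝ} (ht : t ∈ s) :
    HasDerivWithinAt (derivWithin f s) (kpzRhs q lam t (f t) (derivWithin f s t)) s t := by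
  have hd : DifferentiableOn ℝ (derivWithin f s) s :=
    (h.1.derivWithin hs (m := 1) (by norm_num)).differentiableOn one_ne_zero
  have hf'' : derivWithin (derivWithin f s) s t = kpzRhs q lam t (f t) (derivWithin f s t) := by
    unfold kpzRhs
    linarith [h.2 t ht]
  exact hf'' ▸ (hd t ht).hasDerivWithinAt

theorem solvesKPZProfile_of_hasDerivWithinAt (hq : 1 < q) {s : Set ℝ} (hs : UniqueDiffOn ℝ s)
    {g p : ℝ → ℝ} (hg : ∀ t ∈ s, HasDerivWithinAt g (p t) s t)
    (hp : ∀ t ∈ s, HasDerivWithinAt p (kpzRhs q lam t (g t) (p t)) s t) :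
    SolvesKPZProfile q lam s g := by
  have hg' : EqOn (derivWithin g s) p s := fun t ht => (hg t ht).derivWithin (hs t ht)
  have hp' : EqOn (derivWithin p s) (fun t => kpzRhs q lam t (g t) (p t)) s :=
    fun t ht => (hp t ht).derivWithin (hs t ht)
  have hp_cont : ContDiffOn ℝ 1 p s := by
    rw [show (1 : WithTop ℕ∞) = 0 + 1 from rfl, contDiffOn_succ_iff_derivWithin hs]
    refine ⟨fun t ht => (hp t ht).differentiableWithinAt, by simp, ?_⟩
    rw [contDiffOn_zero]
    exact (ContinuousOn.kpzRhs hq (HasDerivWithinAt.continuousOn hg)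
      (HasDerivWithinAt.continuousOn hp)).congr hp'
  refine ⟨?_, fun t ht => ?_⟩
  · rw [show (2 : WithTop ℕ∞) = 1 + 1 from rfl, contDiffOn_succ_iff_derivWithin hs]
    exact ⟨fun t ht => (hg t ht).differentiableWithinAt, by simp, hp_cont.congr hg'⟩
  · rw [derivWithin_congr hg' (hg' ht), hp' ht, hg' ht]
    unfold kpzRhs
    ring

end KPZ

section Estimates

variable {q lam b : ℝ} {f v : ℝ → ℝ}

theorem kpzRhs_pos (hq : 2 < q) (hf : ∀ t ∈ Ico 0 b, HasDerivWithinAt f (v t) (Ico 0 b) t)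
    (hv : ∀ t ∈ Ico 0 b, HasDerivWithinAt v (kpzRhs q lam t (f t) (v t)) (Ico 0 b) t)
    (hf0 : f 0 = -1) (hv0 : v 0 = 0) :
    ∀ t ∈ Ico 0 b, 0 < kpzRhs q lam t (f t) (v t) := by
  have hq1 : 1 < q := by linarith
  set c := (q - 2) / (2 * (q - 1))
  have hc : 0 < c := div_pos (by linarith) (by linarith)
  have hc2 : c < 1 / 2 := by rw [div_lt_iff₀ (by linarith)]; linarith
  refine pos_of_deriv_pos_of_eq_zero (ContinuousOn.kpzRhs hq1 (HasDerivWithinAt.continuousOn hf)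
    (HasDerivWithinAt.continuousOn hv)) ?_ fun τ hτ hwτ hpos => ?_
  · simpa [kpzRhs, hf0, hv0, Real.zero_rpow (by linarith : q ≠ 0)] using hc
  have hτs : Ico 0 b ∈ 𝓝 τ := Ico_mem_nhds hτ.1 hτ.2
  have hsub : Ico 0 τ ⊆ Ico 0 b := Ico_subset_Ico_right hτ.2.le
  have hv_pos : 0 < v τ := by
    have hmono := strictMonoOn_of_hasDerivWithinAt_pos (convex_Icc 0 τ)
      ((HasDerivWithinAt.continuousOn hv).mono (Icc_subset_Ico_right hτ.2))
      (by simpa only [interior_Icc] using fun x hx =>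
        (hv x (hsub (Ioo_subset_Ico_self hx))).mono (Ioo_subset_Ico_self.trans hsub))
      (by simpa only [interior_Icc] using fun x hx => hpos x (Ioo_subset_Ico_self hx))
    simpa [hv0] using hmono ⟨le_rfl, hτ.1.le⟩ ⟨hτ.1.le, le_rfl⟩ hτ.1
  have hf' := (hf τ (Ioo_subset_Ico_self hτ)).hasDerivAt hτs
  have hv' := (hv τ (Ioo_subset_Ico_self hτ)).hasDerivAt hτs
  have hA := ((contDiff_abs_rpow hq1).differentiable one_ne_zero (v τ)).hasDerivAt
  have hw := ((((hasDerivAt_id τ).div_const 2).mul hv').sub ((hA.comp τ hv').const_mul lam)).sub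
    (hf'.const_mul c)
  simp only [hwτ, mul_zero, add_zero, sub_zero] at hw
  have hw' : HasDerivAt (fun t => kpzRhs q lam t (f t) (v t)) ((1 / 2 - c) * v τ) τ :=
    hw.congr_deriv (by ring)
  rw [hw'.deriv]
  exact mul_pos (by linarith) hv_pos

theorem exists_tendsto_nhdsLT_of_kpz (hq : 2 < q) (hlam : 0 ≤ lam) (hb : 0 < b)
    (hf : ∀ t ∈ Ico 0 b, HasDerivWithinAt f (v t) (Ico 0 b) t)
    (hv : ∀ t ∈ Ico 0 b, HasDerivWithinAt v (kpzRhs q lam t (f t) (v t)) (Ico 0 b) t)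
    (hf0 : f 0 = -1) (hv0 : v 0 = 0) :
    ∃ z : ℝ × ℝ, Tendsto (fun t => (f t, v t)) (𝓝[<] b) (𝓝 z) := by
  have hw := kpzRhs_pos hq hf hv hf0 hv0
  have hc : 0 ≤ (q - 2) / (2 * (q - 1)) := div_nonneg (by linarith) (by linarith)
  have hv_mono := monotoneOn_Ico_of_hasDerivWithinAt_nonneg hv fun t ht => (hw t ht).le
  have hv_nonneg : ∀ t ∈ Ico 0 b, 0 ≤ v t := fun t ht => hv0 ▸ hv_mono ⟨le_rfl, hb⟩ ht ht.1
  have hf_mono := monotoneOn_Ico_of_hasDerivWithinAt_nonneg hf hv_nonneg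
  have hf_ge : ∀ t ∈ Ico 0 b, -1 ≤ f t := fun t ht => hf0 ▸ hf_mono ⟨le_rfl, hb⟩ ht ht.1
  have hv_bdd : BddAbove (v '' Ico 0 b) :=
    bddAbove_image_Ico_of_hasDerivWithinAt_le hv (K := b / 2) (ε := (q - 2) / (2 * (q - 1)))
      fun t ht => by
        have h1 : t / 2 * v t ≤ b / 2 * v t :=
          mul_le_mul_of_nonneg_right (by linarith [ht.2]) (hv_nonneg t ht)
        have h2 : 0 ≤ lam * |v t| ^ q := mul_nonneg hlam (by positivity)
        have h3 := mul_le_mul_of_nonneg_left (hf_ge t ht) hc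
        unfold kpzRhs
        linarith
  obtain ⟨M, hM⟩ := id hv_bdd
  have hf_bdd : BddAbove (f '' Ico 0 b) :=
    bddAbove_image_Ico_of_hasDerivWithinAt_le hf (K := 0) (ε := M) fun t ht => by
      simpa using hM ⟨t, ht, rfl⟩
  have hne : (Ioo 0 b).Nonempty := nonempty_Ioo.2 hb
  exact ⟨_, ((hf_mono.mono Ioo_subset_Ico_self).tendsto_nhdsWithin_Ioo_left hne
    (hf_bdd.mono (image_mono Ioo_subset_Ico_self))).prodMk_nhds
    ((hv_mono.mono Ioo_subset_Ico_self).tendsto_nhdsWithin_Ioo_left hne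
    (hv_bdd.mono (image_mono Ioo_subset_Ico_self)))⟩

theorem SolvesKPZProfile.exists_extension (hq : 2 < q) (hlam : 0 ≤ lam) (hb : 0 < b)
    (h : SolvesKPZProfile q lam (Ico 0 b) f) (hf0 : f 0 = -1)
    (hf'0 : derivWithin f (Ico 0 b) 0 = 0) :
    ∃ c > b, ∃ g : ℝ → ℝ, SolvesKPZProfile q lam (Ico 0 c) g ∧
      derivWithin g (Ico 0 c) 0 = 0 ∧ EqOn g f (Ico 0 b) := by
  have hf : ∀ t ∈ Ico 0 b, HasDerivWithinAt f (derivWithin f (Ico 0 b) t) (Ico 0 b) t :=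
    fun t ht => (h.1.differentiableOn (by norm_num) t ht).hasDerivWithinAt
  have hv := fun t (ht : t ∈ Ico 0 b) => h.hasDerivWithinAt_derivWithin (uniqueDiffOn_Ico 0 b) ht
  obtain ⟨z, hz⟩ := exists_tendsto_nhdsLT_of_kpz hq hlam hb hf hv hf0 hf'0
  obtain ⟨c, hbc, Y, hYZ, hY⟩ := exists_extension_of_tendsto_nonautonomous
    (contDiff_kpzField (lam := lam) (by linarith)) hb (fun t ht => (hf t ht).prodMk (hv t ht)) hz
  have hY1 : ∀ t ∈ Ico 0 c, HasDerivWithinAt (fun t => (Y t).1) (Y t).2 (Ico 0 c) t :=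
    fun t ht => by
      simpa [Function.comp_def, kpzField] using hasFDerivAt_fst.comp_hasDerivWithinAt t (hY t ht)
  have hY2 : ∀ t ∈ Ico 0 c,
      HasDerivWithinAt (fun t => (Y t).2) (kpzRhs q lam t (Y t).1 (Y t).2) (Ico 0 c) t :=
    fun t ht => by
      simpa [Function.comp_def, kpzField] using hasFDerivAt_snd.comp_hasDerivWithinAt t (hY t ht)
  have h0 : (0 : ℝ) ∈ Ico 0 c := ⟨le_rfl, hb.trans hbc⟩
  refine ⟨c, hbc, fun t => (Y t).1, solvesKPZProfile_of_hasDerivWithinAt (by linarith)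
    (uniqueDiffOn_Ico 0 c) hY1 hY2, ?_, fun t ht => by simp [hYZ ht]⟩
  rw [(hY1 0 h0).derivWithin (uniqueDiffOn_Ico 0 c 0 h0), hYZ ⟨le_rfl, hb⟩]
  exact hf'0

end Estimates

theorem kpz_profile_global_existence (q lam : ℝ) (hq : 2 < q) (hlam : 0 < lam)
    (ξb : EReal) (hξb : 0 < ξb)
    (f : ℝ → ℝ)
    (hsol : SolvesKPZProfile q lam (KPZDomain ξb) f)
    (hf0 : f 0 = -1)
    (hf'0 : derivWithin f (KPZDomain ξb) 0 = 0)
    (hmax : ∀ ξc : EReal, ξb < ξc →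
      ¬ ∃ g : ℝ → ℝ, SolvesKPZProfile q lam (KPZDomain ξc) g ∧
          g 0 = -1 ∧ derivWithin g (KPZDomain ξc) 0 = 0 ∧
          ∀ x ∈ KPZDomain ξb, g x = f x) :
    ξb = ⊤ := by
  by_contra hne
  obtain ⟨b, rfl⟩ : ∃ b : ℝ, ξb = b := ⟨ξb.toReal, (EReal.coe_toReal hne hξb.ne_bot).symm⟩
  have hdom : ∀ x : ℝ, KPZDomain x = Ico 0 x := fun x => by ext; simp [KPZDomain]
  have hb : 0 < b := by exact_mod_cast hξb
  rw [hdom] at hsol hf'0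
  obtain ⟨c, hbc, g, hg, hg'0, hgf⟩ := hsol.exists_extension hq hlam.le hb hf0 hf'0
  refine hmax c (by exact_mod_cast hbc) ⟨g, ?_, (hgf ⟨le_rfl, hb⟩).trans hf0, ?_, fun x hx => ?_⟩
  · rwa [hdom]
  · rwa [hdom]
  · exact hgf (hdom b ▸ hx)
end

section
/- Let q > 2, λ > 0, and let f : [0,∞) → ℝ be a twice continuously differentiable solution of the ODE f''(ξ) + λ|f'(ξ)|^q − (1/2)ξ f'(ξ) + ((q−2)/(2(q−1))) f(ξ) = 0 on [0,∞) with f(0) = −1 and f'(0) = 0. Then there exists a unique point ξ₀ ∈ (0,∞) such that f(ξ) < 0 for ξ ∈ [0, ξ₀) and f(ξ) > 0 for ξ ∈ (ξ₀, ∞). -/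
open Set Filter Topology Real

/-!
Write `g = f'`, `h = f''` and `c = (q-2)/(2(q-1)) ∈ (0, 1/2)`, so that the equation reads
`h = ξ g / 2 - λ|g|^q - c f`. At `ξ = 0` this gives `h 0 = c > 0`. If `h` had a first zero `σ > 0`,
then `g σ > g 0 = 0`, and differentiating the equation at `σ` (where the `λ`-term has derivative
`λ q g^(q-1) h = 0`) gives `h' σ = (1/2 - c) g σ > 0`, impossible for a function decreasing to `0`
from positive values. Hence `f'` increases strictly from `f' 0 = 0`, so `f` increases strictly and
at least linearly, and crosses `0` exactly once.
-/

section RealCalculus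

variable {f f' : ℝ → ℝ}

lemma strictMonoOn_of_hasDerivWithinAt_pos_of_subset {s D : Set ℝ} (hD : Convex ℝ D)
    (hDs : D ⊆ s) (hf : ∀ x ∈ s, HasDerivWithinAt f (f' x) s x)
    (hf' : ∀ x ∈ interior D, 0 < f' x) : StrictMonoOn f D :=
  strictMonoOn_of_hasDerivWithinAt_pos hD
    (fun x hx => ((hf x (hDs hx)).continuousWithinAt).mono hDs)
    (fun x hx => (((hf x (hDs (interior_subset hx))).hasDerivAt
      (mem_of_superset (isOpen_interior.mem_nhds hx) (interior_subset.trans hDs))).hasDerivWithinAt))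
    hf'

lemma tendsto_atTop_of_hasDerivWithinAt_Ici_ge {a m : ℝ} (hm : 0 < m)
    (hf : ∀ x ∈ Ici a, HasDerivWithinAt f (f' x) (Ici a) x) (hf' : ∀ x ∈ Ioi a, m ≤ f' x) :
    Tendsto f atTop atTop := by
  have hmono : MonotoneOn (fun x => f x - m * x) (Ici a) := by
    refine monotoneOn_of_hasDerivWithinAt_nonneg (f' := fun x => f' x - m) (convex_Ici a)
      (fun x hx => ((hf x hx).sub ((hasDerivWithinAt_id x _).const_mul m)).continuousWithinAt)
      (fun x hx => ?_) (fun x hx => ?_)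
    · rw [interior_Ici] at hx ⊢
      simpa using (((hf x (Ioi_subset_Ici_self hx)).hasDerivAt (Ici_mem_nhds hx)).fun_sub
        ((hasDerivAt_id' x).const_mul m)).hasDerivWithinAt
    · rw [interior_Ici] at hx
      exact sub_nonneg.2 (hf' x hx)
  have hbound : ∀ᶠ x in atTop, f a - m * a ≤ f x - m * x :=
    (eventually_ge_atTop a).mono fun x hx => hmono self_mem_Ici hx hx
  simpa using tendsto_atTop_add_left_of_le' _ _ hbound (tendsto_id.const_mul_atTop hm)

lemma exists_first_zero_of_continuousOn_Ici {h : ℝ → ℝ} {a : ℝ} (hh : ContinuousOn h (Ici a))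
    (ha : 0 < h a) (hneg : ∃ t ∈ Ici a, h t ≤ 0) :
    ∃ σ, a < σ ∧ h σ = 0 ∧ ∀ t ∈ Ico a σ, 0 < h t := by
  set T := Ici a ∩ h ⁻¹' Iic 0
  have hTbdd : BddBelow T := ⟨a, fun x hx => hx.1⟩
  have hσT : sInf T ∈ T :=
    (hh.preimage_isClosed_of_isClosed isClosed_Ici isClosed_Iic).csInf_mem hneg hTbdd
  have hbefore : ∀ t ∈ Ico a (sInf T), 0 < h t := fun t ht =>
    not_le.1 fun hle => (csInf_le hTbdd ⟨ht.1, hle⟩).not_gt ht.2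
  have haσ : a < sInf T := hσT.1.lt_of_ne fun he => (he ▸ hσT.2).not_gt ha
  have hσ_nonneg : 0 ≤ h (sInf T) := by
    have : (𝓝[Ico a (sInf T)] sInf T).NeBot := by
      rw [← mem_closure_iff_nhdsWithin_neBot, closure_Ico haσ.ne]
      exact right_mem_Icc.2 haσ.le
    exact ge_of_tendsto ((hh _ hσT.1).mono Ico_subset_Ici_self)
      (eventually_mem_nhdsWithin.mono fun t ht => (hbefore t ht).le)
  exact ⟨sInf T, haσ, le_antisymm hσT.2 hσ_nonneg, hbefore⟩

lemma HasDerivWithinAt.nonpos_of_isMinOn_Icc {a b d : ℝ} (hab : a < b)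
    (hmin : IsMinOn f (Icc a b) b) (hf : HasDerivWithinAt f d (Icc a b) b) : d ≤ 0 := by
  have hcone : a - b ∈ posTangentConeAt (Icc a b) b :=
    sub_mem_posTangentConeAt_of_segment_subset (by rw [segment_symm, segment_eq_Icc hab.le])
  have := hmin.localize.hasFDerivWithinAt_nonneg hf hcone
  rw [ContinuousLinearMap.toSpanSingleton_apply, smul_eq_mul] at this
  nlinarith

lemma ContDiffOn.hasDerivWithinAt_derivWithin {n : WithTop ℕ∞} {s : Set ℝ}
    (hf : ContDiffOn ℝ n f s) (hn : n ≠ 0) {x : ℝ} (hx : x ∈ s) :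
    HasDerivWithinAt f (derivWithin f s x) s x :=
  (hf.differentiableOn hn x hx).hasDerivWithinAt

lemma existsUnique_sign_change_of_strictMonoOn {a : ℝ}
    (hmono : StrictMonoOn f (Ici a)) (hcont : ContinuousOn f (Ici a)) (ha : f a < 0)
    (htop : Tendsto f atTop atTop) :
    ∃! x, a < x ∧ (∀ ξ, a ≤ ξ → ξ < x → f ξ < 0) ∧ ∀ ξ, x < ξ → 0 < f ξ := by
  obtain ⟨b, hb, hab⟩ := ((htop.eventually_ge_atTop 0).and (eventually_ge_atTop a)).exists
  obtain ⟨x, hx, hfx⟩ := intermediate_value_Icc hab (hcont.mono Icc_subset_Ici_self) ⟨ha.le, hb⟩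
  have hax : a < x := hx.1.lt_of_ne fun he => (he ▸ hfx).not_lt ha
  refine ⟨x, ⟨hax, fun ξ hξ hξx => ?_, fun ξ hxξ => ?_⟩, ?_⟩
  · simpa [hfx] using hmono hξ hax.le hξx
  · simpa [hfx] using hmono hax.le (hax.trans hxξ).le hxξ
  · rintro y ⟨hay, hneg, hpos⟩
    refine le_antisymm (not_lt.1 fun hxy => ?_) (not_lt.1 fun hyx => ?_)
    · exact (hneg x hax.le hxy).ne hfx
    · exact (hpos x hyx).ne' hfx

end RealCalculus

section ProfileEquation

variable {q lam c : ℝ} {s : Set ℝ} {f g h : ℝ → ℝ}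

lemma hasDerivWithinAt_of_profile_eq_zero
    (hf : ∀ ξ ∈ s, HasDerivWithinAt f (g ξ) s ξ) (hg : ∀ ξ ∈ s, HasDerivWithinAt g (h ξ) s ξ)
    (hode : ∀ ξ ∈ s, h ξ = ξ / 2 * g ξ - lam * |g ξ| ^ q - c * f ξ)
    {σ : ℝ} (hσ : σ ∈ s) (hgσ : 0 < g σ) (hhσ : h σ = 0) :
    HasDerivWithinAt h ((1 / 2 - c) * g σ) s σ := by
  have habs : HasDerivWithinAt (fun ξ => |g ξ| ^ q) (q * g σ ^ (q - 1) * h σ) s σ := by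
    refine ((Real.hasDerivAt_rpow_const (Or.inl hgσ.ne')).comp_hasDerivWithinAt σ (hg σ hσ))
      |>.congr_of_eventuallyEq ?_ (by simp [abs_of_pos hgσ])
    filter_upwards [(hg σ hσ).continuousWithinAt (isOpen_Ioi.mem_nhds hgσ)] with ξ hξ
    simp [abs_of_pos (show 0 < g ξ from hξ)]
  have hrhs : HasDerivWithinAt (fun ξ => ξ / 2 * g ξ - lam * |g ξ| ^ q - c * f ξ)
      (1 / 2 * g σ + σ / 2 * h σ - lam * (q * g σ ^ (q - 1) * h σ) - c * g σ) s σ :=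
    (((((hasDerivAt_id' σ).hasDerivWithinAt.div_const 2).fun_mul (hg σ hσ)).fun_sub
      (habs.const_mul lam)).fun_sub ((hf σ hσ).const_mul c))
  refine (hrhs.congr hode (hode σ hσ)).congr_deriv ?_
  rw [hhσ]
  ring

lemma profile_deriv2_pos (hc : c < 1 / 2)
    (hf : ∀ ξ ∈ Ici 0, HasDerivWithinAt f (g ξ) (Ici 0) ξ)
    (hg : ∀ ξ ∈ Ici 0, HasDerivWithinAt g (h ξ) (Ici 0) ξ) (hh : ContinuousOn h (Ici 0))
    (hode : ∀ ξ ∈ Ici 0, h ξ = ξ / 2 * g ξ - lam * |g ξ| ^ q - c * f ξ)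
    (hg0 : g 0 = 0) (hh0 : 0 < h 0) : ∀ ξ ∈ Ici 0, 0 < h ξ := by
  by_contra! hneg
  obtain ⟨σ, hσ, hhσ, hbefore⟩ := exists_first_zero_of_continuousOn_Ici hh hh0 hneg
  have hgσ : 0 < g σ := by
    have hmono : StrictMonoOn g (Icc 0 σ) :=
      strictMonoOn_of_hasDerivWithinAt_pos_of_subset (convex_Icc 0 σ) Icc_subset_Ici_self hg
        fun x hx => hbefore x (Ioo_subset_Ico_self (by rwa [interior_Icc] at hx))
    simpa [hg0] using hmono (left_mem_Icc.2 hσ.le) (right_mem_Icc.2 hσ.le) hσ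
  have hmin : IsMinOn h (Icc 0 σ) σ := fun t ht => by
    rcases ht.2.lt_or_eq with hlt | rfl
    · simpa [hhσ] using (hbefore t ⟨ht.1, hlt⟩).le
    · exact le_refl (h t)
  have hderiv := ((hasDerivWithinAt_of_profile_eq_zero hf hg hode hσ.le hgσ hhσ).mono
    Icc_subset_Ici_self).nonpos_of_isMinOn_Icc hσ hmin
  nlinarith

end ProfileEquation

lemma SolvesKPZProfile.derivWithin_derivWithin_pos {q lam : ℝ} {f : ℝ → ℝ} (hq : 2 < q)
    (hsol : SolvesKPZProfile q lam (Ici 0) f) (hf0 : f 0 < 0)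
    (hf'0 : derivWithin f (Ici 0) 0 = 0) :
    ∀ ξ ∈ Ici (0 : ℝ), 0 < derivWithin (derivWithin f (Ici 0)) (Ici 0) ξ := by
  obtain ⟨hreg, hode⟩ := hsol
  set g := derivWithin f (Ici 0)
  set h := derivWithin g (Ici 0)
  have hg1 : ContDiffOn ℝ 1 g (Ici 0) := hreg.derivWithin (uniqueDiffOn_Ici 0) (by norm_num)
  have hode' : ∀ ξ ∈ Ici (0 : ℝ),
      h ξ = ξ / 2 * g ξ - lam * |g ξ| ^ q - (q - 2) / (2 * (q - 1)) * f ξ := fun ξ hξ => by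
    linarith [hode ξ hξ]
  have hc_pos : 0 < (q - 2) / (2 * (q - 1)) := div_pos (by linarith) (by linarith)
  have hc_lt : (q - 2) / (2 * (q - 1)) < 1 / 2 := by
    rw [div_lt_div_iff₀ (by linarith) (by norm_num)]; linarith
  have hh0 : 0 < h 0 := by
    rw [hode' 0 self_mem_Ici, hf'0, abs_zero, zero_rpow (by linarith)]; nlinarith
  exact profile_deriv2_pos hc_lt (fun ξ => hreg.hasDerivWithinAt_derivWithin (by norm_num))
    (fun ξ => hg1.hasDerivWithinAt_derivWithin one_ne_zero)
    (hg1.derivWithin (m := 0) (uniqueDiffOn_Ici 0) (by norm_num)).continuousOn hode' hf'0 hh0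

theorem kpz_profile_unique_zero_general (q lam : ℝ) (hq : 2 < q)
    (f : ℝ → ℝ)
    (hsol : SolvesKPZProfile q lam (Set.Ici 0) f)
    (hf0 : f 0 = -1)
    (hf'0 : derivWithin f (Set.Ici 0) 0 = 0) :
    ∃! ξ₀ : ℝ, 0 < ξ₀ ∧
      (∀ ξ : ℝ, 0 ≤ ξ → ξ < ξ₀ → f ξ < 0) ∧
      (∀ ξ : ℝ, ξ₀ < ξ → 0 < f ξ) := by
  set g := derivWithin f (Ici 0)
  have hg1 : ContDiffOn ℝ 1 g (Ici 0) := hsol.1.derivWithin (uniqueDiffOn_Ici 0) (by norm_num)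
  have hf : ∀ ξ ∈ Ici (0 : ℝ), HasDerivWithinAt f (g ξ) (Ici 0) ξ := fun ξ =>
    hsol.1.hasDerivWithinAt_derivWithin (by norm_num)
  have hg : ∀ ξ ∈ Ici (0 : ℝ), HasDerivWithinAt g (derivWithin g (Ici 0) ξ) (Ici 0) ξ := fun ξ =>
    hg1.hasDerivWithinAt_derivWithin one_ne_zero
  have hh_pos := hsol.derivWithin_derivWithin_pos hq (by linarith) hf'0
  have hg_mono := strictMonoOn_of_hasDerivWithinAt_pos_of_subset (convex_Ici 0) subset_rfl hg
    fun x hx => hh_pos x (interior_subset hx)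
  have hg_pos : ∀ x ∈ Ioi (0 : ℝ), 0 < g x := fun x hx => by
    simpa [hf'0] using hg_mono self_mem_Ici (Ioi_subset_Ici_self hx) hx
  have hf_mono := strictMonoOn_of_hasDerivWithinAt_pos_of_subset (convex_Ici 0) subset_rfl hf
    fun x hx => hg_pos x (by rwa [interior_Ici] at hx)
  have hf_top : Tendsto f atTop atTop :=
    tendsto_atTop_of_hasDerivWithinAt_Ici_ge (hg_pos 1 (mem_Ioi.2 one_pos))
      (fun x hx => (hf x (mem_Ici.2 (zero_le_one.trans hx))).mono (Ici_subset_Ici.2 zero_le_one))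
      fun x hx => (hg_mono (mem_Ici.2 zero_le_one) (mem_Ici.2 (zero_le_one.trans hx.le)) hx).le
  exact existsUnique_sign_change_of_strictMonoOn hf_mono
    (fun x hx => (hf x hx).continuousWithinAt) (by linarith) hf_top

theorem kpz_profile_unique_zero (q lam : ℝ) (hq : 2 < q) (hlam : 0 < lam)
    (f : ℝ → ℝ)
    (hsol : SolvesKPZProfile q lam (Set.Ici 0) f)
    (hf0 : f 0 = -1)
    (hf'0 : derivWithin f (Set.Ici 0) 0 = 0) :
    ∃! ξ₀ : ℝ, 0 < ξ₀ ∧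
      (∀ ξ : ℝ, 0 ≤ ξ → ξ < ξ₀ → f ξ < 0) ∧
      (∀ ξ : ℝ, ξ₀ < ξ → 0 < f ξ) :=
  kpz_profile_unique_zero_general q lam hq f hsol hf0 hf'0
end

section
/- Let q > 2 and λ > 0, and let g : ℝ → ℝ be a twice continuously differentiable function with g > 0 satisfying the ODE g''(t) + ((3−q)/(q−1)) g'(t) − ((q−2)/(q−1)²) g(t) = [ (1/2) g'(t) − λ q g(t)^{q−1} g'(t) + (1/(q−1)) g(t) − (λq/(q−1)) g(t)^q ] e^{2t} on ℝ. If t₀ ∈ ℝ is a point with g'(t₀) = 0 and g''(t₀) ≤ 0 (in particular, any local maximum of g), then g(t₀) > C₀, where C₀ = (1/(λq))^{1/(q−1)}. -/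
/-! At a critical point `t₀` with `g''(t₀) ≤ 0` the left-hand side of the ODE is
`g''(t₀) - (q-2)/(q-1)² g(t₀) < 0`, so the bracket on the right, which reduces to
`(g - λq g^q)/(q-1)`, is negative. Hence `1 < λq g(t₀)^(q-1)`, i.e. `g(t₀) > C₀`. -/

open Set Filter Topology Real

lemma one_div_rpow_one_div_lt_of_lt_mul_rpow_add_one {x c p : ℝ} (hx : 0 < x) (hc : 0 < c)
    (hp : 0 < p) (h : x < c * x ^ (p + 1)) : (1 / c) ^ (1 / p) < x := by
  have hxp : 1 / c < x ^ p := by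
    rw [rpow_add hx, rpow_one] at h
    rw [div_lt_iff₀ hc]
    nlinarith
  calc (1 / c) ^ (1 / p) < (x ^ p) ^ (1 / p) := by gcongr
    _ = x := by rw [← rpow_mul hx.le, mul_one_div_cancel hp.ne', rpow_one]

theorem kpz_g_local_max_above_C0_general (q lam : ℝ) (hq : 2 < q) (hlam : 0 < lam)
    (g : ℝ → ℝ) (hgpos : ∀ t : ℝ, 0 < g t)
    (hode : ∀ t : ℝ,
      deriv (deriv g) t + ((3 - q) / (q - 1)) * deriv g t
          - ((q - 2) / (q - 1) ^ 2) * g t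
        = ((1 / 2) * deriv g t - lam * q * g t ^ (q - 1) * deriv g t
            + (1 / (q - 1)) * g t - (lam * q / (q - 1)) * g t ^ q) * Real.exp (2 * t))
    (t₀ : ℝ) (ht₀' : deriv g t₀ = 0) (ht₀'' : deriv (deriv g) t₀ ≤ 0) :
    (1 / (lam * q)) ^ (1 / (q - 1)) < g t₀ := by
  have hq1 : 0 < q - 1 := by linarith
  have hg₀ := hgpos t₀
  have hode₀ := hode t₀
  rw [ht₀'] at hode₀
  have hdamp : 0 < (q - 2) / (q - 1) ^ 2 * g t₀ := by
    have : 0 < q - 2 := by linarith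
    positivity
  have hbracket : (g t₀ - lam * q * g t₀ ^ q) / (q - 1) * exp (2 * t₀) < 0 := by
    have hrhs : ((1 / (q - 1)) * g t₀ - (lam * q / (q - 1)) * g t₀ ^ q) * exp (2 * t₀) < 0 := by
      linarith
    convert hrhs using 2
    ring
  have hkey : g t₀ < lam * q * g t₀ ^ ((q - 1) + 1) := by
    rw [sub_add_cancel, ← sub_neg]
    exact neg_of_div_neg_left (neg_of_mul_neg_left hbracket (exp_pos _).le) hq1.le
  exact one_div_rpow_one_div_lt_of_lt_mul_rpow_add_one hg₀ (by positivity) hq1 hkey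

theorem kpz_g_local_max_above_C0 (q lam : ℝ) (hq : 2 < q) (hlam : 0 < lam)
    (g : ℝ → ℝ) (hg : ContDiff ℝ 2 g) (hgpos : ∀ t : ℝ, 0 < g t)
    (hode : ∀ t : ℝ,
      deriv (deriv g) t + ((3 - q) / (q - 1)) * deriv g t
          - ((q - 2) / (q - 1) ^ 2) * g t
        = ((1 / 2) * deriv g t - lam * q * g t ^ (q - 1) * deriv g t
            + (1 / (q - 1)) * g t - (lam * q / (q - 1)) * g t ^ q) * Real.exp (2 * t))
    (t₀ : ℝ) (ht₀' : deriv g t₀ = 0) (ht₀'' : deriv (deriv g) t₀ ≤ 0) :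
    (1 / (lam * q)) ^ (1 / (q - 1)) < g t₀ :=
  kpz_g_local_max_above_C0_general q lam hq hlam g hgpos hode t₀ ht₀' ht₀''
end

section
/- Let q > 2 and λ > 0, and let f : [0,∞) → ℝ be a twice differentiable function satisfying f'(ξ) < 0 on (0,∞) and the differential inequality f''(ξ) < −λ |f'(ξ)|^q on (0,∞). Then for any 0 < ξ₁ < ξ one has 1/((q−1) |f'(ξ₁)|^{q−1}) > λ (ξ − ξ₁); consequently no such function f can exist on all of [0,∞). -/
/-! If `u = -f' > 0` satisfies `u' > λ uᵠ`, then `F = u^{1-q} / (1-q)` has `F' = u' u^{-q} > λ`,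
so by the mean value theorem `λ (ξ - ξ₁) < F ξ - F ξ₁ < -F ξ₁ = 1 / ((q-1) u(ξ₁)^{q-1})`,
using `F < 0`. A bound on `ξ - ξ₁` uniform in `ξ` is impossible on an unbounded interval. -/

open Set Filter Topology Real

section SuperlinearGrowth

variable {u u' : ℝ → ℝ} {q lam a : ℝ}

lemma hasDerivAt_rpow_one_sub_div {x : ℝ} (hu : HasDerivAt u (u' x) x) (hpos : 0 < u x)
    (hq : q ≠ 1) :
    HasDerivAt (fun y => u y ^ (1 - q) / (1 - q)) (u' x * u x ^ (-q)) x := by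
  refine ((hu.rpow_const (p := 1 - q) (Or.inl hpos.ne')).div_const (1 - q)).congr_deriv ?_
  have : 1 - q ≠ 0 := sub_ne_zero.mpr hq.symm
  rw [sub_sub_cancel_left]
  field_simp

theorem mul_sub_lt_one_div_of_lt_deriv (hq : 1 < q)
    (hderiv : ∀ x, a < x → HasDerivAt u (u' x) x) (hpos : ∀ x, a < x → 0 < u x)
    (hineq : ∀ x, a < x → lam * u x ^ q < u' x) {ξ₁ ξ : ℝ} (hξ₁ : a < ξ₁) (hξ : ξ₁ < ξ) :
    lam * (ξ - ξ₁) < 1 / ((q - 1) * u ξ₁ ^ (q - 1)) := by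
  set F : ℝ → ℝ := fun y => u y ^ (1 - q) / (1 - q)
  have hF : ∀ x, a < x → HasDerivAt F (u' x * u x ^ (-q)) x := fun x hx =>
    hasDerivAt_rpow_one_sub_div (hderiv x hx) (hpos x hx) hq.ne'
  have hF' : ∀ x ∈ interior (Ioi a), lam < deriv F x := by
    intro x hx
    rw [interior_Ioi] at hx
    calc lam = lam * u x ^ q * u x ^ (-q) := by
            rw [mul_assoc, ← rpow_add (hpos x hx), add_neg_cancel, rpow_zero, mul_one]
      _ < u' x * u x ^ (-q) :=
            mul_lt_mul_of_pos_right (hineq x hx) (rpow_pos_of_pos (hpos x hx) _)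
      _ = deriv F x := (hF x hx).deriv.symm
  have hgrowth := (convex_Ioi a).mul_sub_lt_image_sub_of_lt_deriv
    (fun x hx => (hF x hx).continuousAt.continuousWithinAt)
    (fun x hx => (hF x (by rwa [interior_Ioi] at hx)).differentiableAt.differentiableWithinAt)
    hF' ξ₁ hξ₁ ξ (hξ₁.trans hξ) hξ
  have hFξ : F ξ < 0 :=
    div_neg_of_pos_of_neg (rpow_pos_of_pos (hpos ξ (hξ₁.trans hξ)) _) (by linarith)
  have hFξ₁ : -F ξ₁ = 1 / ((q - 1) * u ξ₁ ^ (q - 1)) := by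
    have h1q : 1 - q = -(q - 1) := by ring
    simp only [F, h1q, rpow_neg (hpos ξ₁ hξ₁).le]
    field_simp
  linarith

theorem false_of_lt_deriv_rpow (hq : 1 < q) (hlam : 0 < lam)
    (hderiv : ∀ x, a < x → HasDerivAt u (u' x) x) (hpos : ∀ x, a < x → 0 < u x)
    (hineq : ∀ x, a < x → lam * u x ^ q < u' x) : False := by
  set C := 1 / ((q - 1) * u (a + 1) ^ (q - 1))
  have hC : 0 < C := by
    have := rpow_pos_of_pos (hpos (a + 1) (by linarith)) (q - 1)
    have : 0 < q - 1 := by linarith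
    positivity
  have := mul_sub_lt_one_div_of_lt_deriv hq hderiv hpos hineq (ξ₁ := a + 1)
    (ξ := a + 1 + C / lam) (by linarith) (by linarith [div_pos hC hlam])
  rw [add_sub_cancel_left, mul_div_cancel₀ _ hlam.ne'] at this
  exact this.false

end SuperlinearGrowth

theorem kpz_integrated_diff_ineq_general (q lam : ℝ) (hq : 2 < q) (hlam : 0 < lam)
    (f : ℝ → ℝ)
    (hdiff' : DifferentiableOn ℝ (derivWithin f (Set.Ici 0)) (Set.Ici 0))
    -- `f' < 0` on `(0, ∞)`:
    (hf'neg : ∀ ξ : ℝ, 0 < ξ → derivWithin f (Set.Ici 0) ξ < 0)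
    -- the differential inequality `f'' < -λ |f'|^q` on `(0, ∞)`:
    (hineq : ∀ ξ : ℝ, 0 < ξ →
      derivWithin (derivWithin f (Set.Ici 0)) (Set.Ici 0) ξ
        < -lam * |derivWithin f (Set.Ici 0) ξ| ^ q) :
    (∀ ξ₁ ξ : ℝ, 0 < ξ₁ → ξ₁ < ξ →
      lam * (ξ - ξ₁) < 1 / ((q - 1) * |derivWithin f (Set.Ici 0) ξ₁| ^ (q - 1))) ∧
    False := by
  set g := derivWithin f (Ici 0)
  have hq1 : 1 < q := by linarith
  have hderiv : ∀ x, 0 < x → HasDerivAt (fun y => -g y) (-derivWithin g (Ici 0) x) x := by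
    intro x hx
    have hmem : Ici (0 : ℝ) ∈ 𝓝 x := Ici_mem_nhds hx
    rw [derivWithin_of_mem_nhds hmem]
    exact ((hdiff' x hx.le).differentiableAt hmem).hasDerivAt.neg
  have hpos : ∀ x, 0 < x → 0 < -g x := fun x hx => neg_pos.mpr (hf'neg x hx)
  have habs : ∀ x, 0 < x → |g x| = -g x := fun x hx => abs_of_neg (hf'neg x hx)
  have hineq' : ∀ x, 0 < x → lam * (-g x) ^ q < -derivWithin g (Ici 0) x := by
    intro x hx
    linarith [habs x hx ▸ hineq x hx]
  refine ⟨fun ξ₁ ξ hξ₁ hξ => ?_, false_of_lt_deriv_rpow hq1 hlam hderiv hpos hineq'⟩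
  rw [habs ξ₁ hξ₁]
  exact mul_sub_lt_one_div_of_lt_deriv hq1 hderiv hpos hineq' hξ₁ hξ

theorem kpz_integrated_diff_ineq (q lam : ℝ) (hq : 2 < q) (hlam : 0 < lam)
    (f : ℝ → ℝ)
    -- `f` is twice differentiable on `[0, ∞)`:
    (hdiff : DifferentiableOn ℝ f (Set.Ici 0))
    (hdiff' : DifferentiableOn ℝ (derivWithin f (Set.Ici 0)) (Set.Ici 0))
    -- `f' < 0` on `(0, ∞)`:
    (hf'neg : ∀ ξ : ℝ, 0 < ξ → derivWithin f (Set.Ici 0) ξ < 0)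
    -- the differential inequality `f'' < -λ |f'|^q` on `(0, ∞)`:
    (hineq : ∀ ξ : ℝ, 0 < ξ →
      derivWithin (derivWithin f (Set.Ici 0)) (Set.Ici 0) ξ
        < -lam * |derivWithin f (Set.Ici 0) ξ| ^ q) :
    (∀ ξ₁ ξ : ℝ, 0 < ξ₁ → ξ₁ < ξ →
      lam * (ξ - ξ₁) < 1 / ((q - 1) * |derivWithin f (Set.Ici 0) ξ₁| ^ (q - 1))) ∧
    False :=
  kpz_integrated_diff_ineq_general q lam hq hlam f hdiff' hf'neg hineq
end
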